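/- arXiv:2605.21881 — 5 statements merged into one kernel-verified Lean document; each statement's English description precedes it below -/
import Mathlib

section
/- Let v be a reduced state function. Then v is a self-similar weak solution of u_t + f(u)_x = 0 if and only if M(v(ζ), ξ, v(ξ)) (v(ξ) − v(ζ)) + ∫_ζ^ξ (v(ξ') − v(ζ)) dξ' = 0 for almost every (ζ, ξ) ∈ ℝ² (with respect to two-dimensional Lebesgue measure). -/
open MeasureTheory Set Matrix

noncomputable section

/-- The essential image of `h` restricted to `Y`: the set of `z` every neighborhood of
which has preimage of positive measure inside `Y`. -/
def essimOn {α : Type*} [MeasureSpace α] {n : ℕ}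
    (h : α → (Fin n → ℝ)) (Y : Set α) : Set (Fin n → ℝ) :=
  {z | ∀ V : Set (Fin n → ℝ), IsOpen V → z ∈ V → 0 < volume (h ⁻¹' V ∩ Y)}

/-- Left ess-im accumulation set of `v` at `ξ`. -/
def AessL {n : ℕ} (v : ℝ → (Fin n → ℝ)) (ξ : ℝ) : Set (Fin n → ℝ) :=
  ⋂ r > (0:ℝ), essimOn v (Set.Ioo (ξ - r) ξ)

/-- Right ess-im accumulation set of `v` at `ξ`. -/
def AessR {n : ℕ} (v : ℝ → (Fin n → ℝ)) (ξ : ℝ) : Set (Fin n → ℝ) :=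
  ⋂ r > (0:ℝ), essimOn v (Set.Ioo ξ (ξ + r))

/-- Two-sided ess-im accumulation set of `v` at `ξ`. -/
def Aess {n : ℕ} (v : ℝ → (Fin n → ℝ)) (ξ : ℝ) : Set (Fin n → ℝ) :=
  ⋂ r > (0:ℝ), essimOn v (Set.Ioo (ξ - r) (ξ + r))

/-- `ξ` is an ess-im continuity point of `v`. -/
def EssImContPt {n : ℕ} (v : ℝ → (Fin n → ℝ)) (ξ : ℝ) : Prop :=
  ∃ z : Fin n → ℝ, AessL v ξ = {z} ∧ AessR v ξ = {z}

/-- Strictly hyperbolic region: states `u ∈ U` where `A(u) = Df(u)` has `n` distinct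
real eigenvalues. -/
def USH {n : ℕ} (f : (Fin n → ℝ) → (Fin n → ℝ)) (U : Set (Fin n → ℝ)) :
    Set (Fin n → ℝ) :=
  {u | u ∈ U ∧ ∃ lam : Fin n → ℝ, Function.Injective lam ∧
    ∀ i, Module.End.HasEigenvalue
      ((fderiv ℝ f u).toLinearMap : Module.End ℝ (Fin n → ℝ)) (lam i)}

/-- A reduced state function: essentially bounded measurable `v : ℝ → ℝⁿ` with
essential image contained in the strictly hyperbolic region. -/
def IsReducedState {n : ℕ} (f : (Fin n → ℝ) → (Fin n → ℝ)) (U : Set (Fin n → ℝ))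
    (v : ℝ → (Fin n → ℝ)) : Prop :=
  Measurable v ∧ (∃ C : ℝ, ∀ᵐ ξ : ℝ ∂volume, ‖v ξ‖ ≤ C) ∧
    essimOn v Set.univ ⊆ USH f U

/-- `v` is a self-similar weak solution of `u_t + f(u)_x = 0`. -/
def IsSSWeakSol {n : ℕ} (f : (Fin n → ℝ) → (Fin n → ℝ)) (v : ℝ → (Fin n → ℝ)) : Prop :=
  ∀ ψ : ℝ → (Fin n → ℝ), ContDiff ℝ 1 ψ → HasCompactSupport ψ →
    ∫ ξ : ℝ, ((deriv ψ ξ) ⬝ᵥ ((-ξ) • v ξ + f (v ξ)) - (ψ ξ) ⬝ᵥ (v ξ)) = 0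

/-- `det (−ξ I + Df(u))`. -/
def detShift {n : ℕ} (f : (Fin n → ℝ) → (Fin n → ℝ)) (ξ : ℝ) (u : Fin n → ℝ) : ℝ :=
  LinearMap.det (-(ξ • (LinearMap.id : (Fin n → ℝ) →ₗ[ℝ] (Fin n → ℝ)))
    + (fderiv ℝ f u).toLinearMap)

/-- The averaged matrix `M(u⁻, ξ, u⁺) = −ξ I + ∫₀¹ Df((1−τ)u⁻ + τu⁺) dτ`. -/
def Mmat {n : ℕ} (f : (Fin n → ℝ) → (Fin n → ℝ)) (um : Fin n → ℝ) (ξ : ℝ)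
    (up : Fin n → ℝ) : (Fin n → ℝ) →L[ℝ] (Fin n → ℝ) :=
  -(ξ • (1 : (Fin n → ℝ) →L[ℝ] (Fin n → ℝ))) +
    ∫ τ in (0:ℝ)..(1:ℝ), fderiv ℝ f ((1 - τ) • um + τ • up)


namespace SSAux

variable {n : ℕ}

lemma essim_spec (v : ℝ → Fin n → ℝ) :
    ∃ W : Set (Fin n → ℝ), IsOpen W ∧ (essimOn v Set.univ)ᶜ = W ∧ volume (v ⁻¹' W) = 0 := by
  classical
  set 𝒱 : Set (Set (Fin n → ℝ)) := {V | IsOpen V ∧ volume (v ⁻¹' V) = 0} with h𝒱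
  refine ⟨⋃₀ 𝒱, isOpen_sUnion fun s hs => hs.1, ?_, ?_⟩
  · ext z
    simp only [mem_compl_iff, essimOn, mem_setOf_eq, mem_sUnion, not_forall]
    constructor
    · rintro ⟨V, hV, hzV, hpos⟩
      rw [not_lt, nonpos_iff_eq_zero, Set.inter_univ] at hpos
      exact ⟨V, ⟨hV, hpos⟩, hzV⟩
    · rintro ⟨V, ⟨hV, h0⟩, hzV⟩
      exact ⟨V, hV, hzV, by rw [not_lt, nonpos_iff_eq_zero, Set.inter_univ]; exact h0⟩
  · obtain ⟨T, hTc, hTsub, hTU⟩ := TopologicalSpace.isOpen_sUnion_countable 𝒱 (fun s hs => hs.1)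
    rw [← hTU, Set.sUnion_eq_biUnion, Set.preimage_iUnion]
    simp only [Set.preimage_iUnion]
    refine (measure_biUnion_null_iff hTc).2 fun s hs => (hTsub hs).2

lemma isClosed_essim (v : ℝ → Fin n → ℝ) : IsClosed (essimOn v Set.univ) := by
  obtain ⟨W, hW, hWc, -⟩ := essim_spec v
  rw [← compl_compl (essimOn v Set.univ), hWc]
  exact hW.isClosed_compl

lemma ae_mem_essim (v : ℝ → Fin n → ℝ) : ∀ᵐ ξ : ℝ, v ξ ∈ essimOn v Set.univ := by
  obtain ⟨W, -, hWc, hW0⟩ := essim_spec v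
  rw [MeasureTheory.ae_iff]
  refine measure_mono_null (fun ξ hξ => ?_) hW0
  simp only [mem_setOf_eq] at hξ
  show ξ ∈ v ⁻¹' W
  rw [← hWc]; exact hξ

lemma essim_nonempty (v : ℝ → Fin n → ℝ) : (essimOn v Set.univ).Nonempty := by
  by_contra h
  rw [Set.not_nonempty_iff_eq_empty] at h
  have := ae_mem_essim v
  rw [h] at this
  simp only [Set.mem_empty_iff_false] at this
  have h2 : (volume : Measure ℝ) Set.univ = 0 := by
    simpa [MeasureTheory.ae_iff] using this
  simp [Real.volume_univ] at h2

lemma essim_bounded (v : ℝ → Fin n → ℝ) {C : ℝ} (hC : ∀ᵐ ξ : ℝ, ‖v ξ‖ ≤ C) :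
    ∀ z ∈ essimOn v Set.univ, ‖z‖ ≤ C := by
  intro z hz
  by_contra h
  rw [not_le] at h
  have hpos := hz {y | C < ‖y‖} (isOpen_lt continuous_const continuous_norm) h
  rw [Set.inter_univ] at hpos
  have : volume (v ⁻¹' {y | C < ‖y‖}) = 0 := by
    rw [MeasureTheory.ae_iff] at hC
    refine measure_mono_null (fun ξ hξ => ?_) hC
    simp only [mem_setOf_eq, not_le] at hξ ⊢
    exact hξ
  rw [this] at hpos
  exact lt_irrefl _ hpos

/-- Integral of the derivative of a `C¹` compactly supported function vanishes. -/
lemma integral_deriv_cs {E : Type*} [NormedAddCommGroup E] [NormedSpace ℝ E] [CompleteSpace E]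
    {ψ : ℝ → E} (hψ : ContDiff ℝ 1 ψ) (hc : HasCompactSupport ψ) :
    ∫ x : ℝ, deriv ψ x = 0 := by
  obtain ⟨R, hR⟩ := hc.isBounded.subset_closedBall 0
  rw [Real.closedBall_eq_Icc] at hR
  have hsupp : Function.support (deriv ψ) ⊆ Set.Ioc (-(R+1)) (R+1) := by
    refine (support_deriv_subset.trans hR).trans ?_
    intro x hx
    simp only [zero_sub, zero_add, mem_Icc] at hx
    exact ⟨by linarith [hx.1], by linarith [hx.2]⟩
  rw [← intervalIntegral.integral_eq_integral_of_support_subset hsupp]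
  rw [intervalIntegral.integral_eq_sub_of_hasDerivAt
    (fun x _ => ((hψ.differentiable one_ne_zero) x).hasDerivAt)
    ((hψ.continuous_deriv le_rfl).intervalIntegrable _ _)]
  have h1 : ψ (R+1) = 0 := by
    apply image_eq_zero_of_notMem_tsupport
    intro hmem
    have := hR hmem
    simp only [zero_sub, zero_add, mem_Icc] at this
    linarith [this.2]
  have h2 : ψ (-(R+1)) = 0 := by
    apply image_eq_zero_of_notMem_tsupport
    intro hmem
    have := hR hmem
    simp only [zero_sub, zero_add, mem_Icc] at this
    linarith [this.1]
  rw [h1, h2, sub_zero]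

lemma mmat_apply {U : Set (Fin n → ℝ)} (hU : IsOpen U)
    {f : (Fin n → ℝ) → (Fin n → ℝ)} (hf : ContDiffOn ℝ 2 f U)
    {a b : Fin n → ℝ} (hseg : ∀ τ : ℝ, τ ∈ Set.Icc (0:ℝ) 1 → (1 - τ) • a + τ • b ∈ U)
    (ξ : ℝ) :
    (Mmat f a ξ b) (b - a) = (-ξ) • (b - a) + (f b - f a) := by
  set γ : ℝ → (Fin n → ℝ) := fun τ => (1 - τ) • a + τ • b with hγ
  have hγτ : ∀ τ : ℝ, γ τ = a + τ • (b - a) := by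
    intro τ
    simp only [hγ, smul_sub, sub_smul, one_smul]
    abel
  have hγcont : Continuous γ := by
    apply Continuous.add
    · exact (continuous_const.sub continuous_id).smul continuous_const
    · exact continuous_id.smul continuous_const
  have hDf : ContinuousOn (fderiv ℝ f) U := hf.continuousOn_fderiv_of_isOpen hU (by norm_num)
  have hmaps : Set.MapsTo γ (Set.Icc (0:ℝ) 1) U := fun τ hτ => hseg τ hτ
  have hcont2 : ContinuousOn (fun τ => fderiv ℝ f (γ τ)) (Set.Icc (0:ℝ) 1) :=
    hDf.comp hγcont.continuousOn hmaps
  have hInt : IntervalIntegrable (fun τ => fderiv ℝ f (γ τ)) volume 0 1 := by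
    apply ContinuousOn.intervalIntegrable
    rwa [Set.uIcc_of_le (by norm_num : (0:ℝ) ≤ 1)]
  have happ : (∫ τ in (0:ℝ)..(1:ℝ), fderiv ℝ f (γ τ)) (b - a)
      = ∫ τ in (0:ℝ)..(1:ℝ), (fderiv ℝ f (γ τ)) (b - a) := by
    exact ContinuousLinearMap.intervalIntegral_apply hInt (b - a)
  have hder : ∀ τ ∈ Set.uIcc (0:ℝ) 1,
      HasDerivAt (fun s => f (γ s)) ((fderiv ℝ f (γ τ)) (b - a)) τ := by
    intro τ hτ
    rw [Set.uIcc_of_le (by norm_num : (0:ℝ) ≤ 1)] at hτ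
    have hU' : U ∈ nhds (γ τ) := hU.mem_nhds (hseg τ hτ)
    have hdf : HasFDerivAt f (fderiv ℝ f (γ τ)) (γ τ) :=
      ((hf.differentiableOn (by norm_num)).differentiableAt hU').hasFDerivAt
    have hγd : HasDerivAt γ (b - a) τ := by
      have : HasDerivAt (fun s : ℝ => a + s • (b - a)) ((1:ℝ) • (b - a)) τ :=
        ((hasDerivAt_id τ).smul_const (b - a)).const_add a
      rw [one_smul] at this
      have heq : γ = fun s : ℝ => a + s • (b - a) := funext hγτ
      rw [heq]
      exact this
    exact hdf.comp_hasDerivAt τ hγd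
  have hIntd : IntervalIntegrable (fun τ => (fderiv ℝ f (γ τ)) (b - a)) volume 0 1 := by
    apply ContinuousOn.intervalIntegrable
    rw [Set.uIcc_of_le (by norm_num : (0:ℝ) ≤ 1)]
    exact hcont2.clm_apply continuousOn_const
  have hFTC := intervalIntegral.integral_eq_sub_of_hasDerivAt hder hIntd
  have hγ1 : γ 1 = b := by simp [hγ]
  have hγ0 : γ 0 = a := by simp [hγ]
  rw [hγ1, hγ0] at hFTC
  show (-(ξ • (1 : (Fin n → ℝ) →L[ℝ] (Fin n → ℝ))) +
    ∫ τ in (0:ℝ)..(1:ℝ), fderiv ℝ f (γ τ)) (b - a) = _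
  rw [ContinuousLinearMap.add_apply, ContinuousLinearMap.neg_apply,
    ContinuousLinearMap.smul_apply, ContinuousLinearMap.one_apply, happ, hFTC, neg_smul]

/-- A measurable function vanishing outside `Icc a b` and bounded there is integrable. -/
lemma integrable_of_bound_on_support {F : ℝ → ℝ} (hF : AEStronglyMeasurable F volume)
    {a b M : ℝ} (hsupp : ∀ x, x ∉ Set.Icc a b → F x = 0)
    (hM : ∀ x, |F x| ≤ M) : Integrable F volume := by
  have hsub : Function.support F ⊆ Set.Icc a b := by
    intro x hx
    by_contra h
    exact hx (hsupp x h)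
  rw [← integrableOn_iff_integrable_of_support_subset hsub]
  refine Integrable.mono' (g := fun _ => M) ?_ hF.restrict ?_
  · exact integrableOn_const measure_Icc_lt_top.ne
  · exact Filter.Eventually.of_forall fun x => hM x

/-- du Bois-Reymond: a locally integrable function whose integral against derivatives of
`C¹` compactly supported functions vanishes is a.e. constant. -/
lemma ae_const_of_integral_deriv_mul {G : ℝ → ℝ} (hG : LocallyIntegrable G volume)
    (h : ∀ h : ℝ → ℝ, ContDiff ℝ 1 h → HasCompactSupport h →
      ∫ x : ℝ, deriv h x * G x = 0) :
    ∃ c : ℝ, ∀ᵐ x : ℝ ∂volume, G x = c := by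
  classical
  -- normalized bump
  let bump : ContDiffBump (0:ℝ) := ⟨1, 2, one_pos, one_lt_two⟩
  let θ : ℝ → ℝ := bump.normed volume
  have hθint : ∫ x : ℝ, θ x = 1 := bump.integral_normed
  have hθsmooth : ContDiff ℝ (⊤ : ℕ∞) θ := bump.contDiff_normed
  have hθcs : HasCompactSupport θ := bump.hasCompactSupport_normed
  set c : ℝ := ∫ x : ℝ, θ x * G x with hc
  refine ⟨c, ?_⟩
  have key : ∀ᵐ x : ℝ ∂volume, G x - c = 0 := by
    apply ae_eq_zero_of_integral_contDiff_smul_eq_zero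
    · exact hG.sub (locallyIntegrable_const c)
    · intro g hg hgcs
      have hgint : Integrable g volume := hg.continuous.integrable_of_hasCompactSupport hgcs
      have hgG : Integrable (fun x => g x * G x) volume :=
        hG.integrable_smul_left_of_hasCompactSupport hg.continuous hgcs
      have hθG : Integrable (fun x => θ x * G x) volume :=
        hG.integrable_smul_left_of_hasCompactSupport (hθsmooth.continuous) hθcs
      -- the key claim : ∫ g G = (∫ g) * c
      have hkey : ∫ x : ℝ, g x * G x = (∫ x : ℝ, g x) * c := by
        -- build the primitive of ρ = g - (∫g) θ
        set r : ℝ := ∫ x : ℝ, g x with hr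
        set ρ : ℝ → ℝ := fun t => g t - r * θ t with hρ
        have hρcont : Continuous ρ := hg.continuous.sub (continuous_const.mul hθsmooth.continuous)
        have hρint : Integrable ρ volume :=
          hgint.sub ((hθsmooth.continuous.integrable_of_hasCompactSupport hθcs).const_mul r)
        have hρtot : ∫ t : ℝ, ρ t = 0 := by
          rw [integral_sub hgint ((hθsmooth.continuous.integrable_of_hasCompactSupport hθcs).const_mul r),
            integral_const_mul, hθint]
          simp [hr]
        -- support bound
        obtain ⟨R, hR⟩ := (hgcs.union hθcs).isBounded.subset_closedBall 0
        rw [Real.closedBall_eq_Icc] at hR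
        have hρsupp : ∀ t, t ∉ Set.Icc (-R) R → ρ t = 0 := by
          intro t ht
          have hg0 : g t = 0 := by
            apply image_eq_zero_of_notMem_tsupport
            intro hmem
            exact ht (by simpa using hR (Set.mem_union_left _ hmem))
          have hθ0 : θ t = 0 := by
            apply image_eq_zero_of_notMem_tsupport
            intro hmem
            exact ht (by simpa using hR (Set.mem_union_right _ hmem))
          simp [hρ, hg0, hθ0]
        set a : ℝ := -R - 1 with ha
        set φ : ℝ → ℝ := fun x => ∫ t in a..x, ρ t with hφ
        have hder : ∀ x : ℝ, HasDerivAt φ (ρ x) x := fun x =>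
          (hρcont.integral_hasStrictDerivAt a x).hasDerivAt
        have hφderiv : deriv φ = ρ := funext fun x => (hder x).deriv
        have hφC1 : ContDiff ℝ 1 φ := contDiff_one_iff_deriv.2
          ⟨fun x => (hder x).differentiableAt, by rw [hφderiv]; exact hρcont⟩
        have hφcs : HasCompactSupport φ := by
          apply HasCompactSupport.intro (isCompact_Icc (a := a) (b := R))
          intro x hx
          simp only [Set.mem_Icc, not_and_or, not_le] at hx
          rcases hx with hx | hx
          · -- x < a
            show (∫ t in a..x, ρ t) = 0
            rw [intervalIntegral.integral_congr (g := fun _ => (0:ℝ)) ?_,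
              intervalIntegral.integral_zero]
            intro t ht
            rw [Set.uIcc_of_ge (le_of_lt hx)] at ht
            refine hρsupp t ?_
            simp only [Set.mem_Icc, not_and_or, not_le]
            left
            have : t ≤ a := ht.2
            simp only [ha] at this
            linarith
          · -- x > R
            show (∫ t in a..x, ρ t) = 0
            have hsub : Function.support ρ ⊆ Set.Ioc a x := by
              intro t ht
              have htmem : t ∈ Set.Icc (-R) R := by
                by_contra hcon
                exact ht (hρsupp t hcon)
              constructor
              · simp only [ha]; linarith [htmem.1]
              · linarith [htmem.2]
            rw [intervalIntegral.integral_eq_integral_of_support_subset hsub]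
            exact hρtot
        have h0 := h φ hφC1 hφcs
        rw [hφderiv] at h0
        have hsplit : ∀ x : ℝ, ρ x * G x = g x * G x - r * (θ x * G x) := by
          intro x
          simp only [hρ]
          ring
        rw [show (fun x => ρ x * G x) = fun x => g x * G x - r * (θ x * G x) from
          funext hsplit] at h0
        rw [integral_sub hgG (hθG.const_mul r), integral_const_mul, sub_eq_zero] at h0
        rw [h0, hc, hr]
      have : ∀ x : ℝ, g x • (G x - c) = g x * G x - g x * c := by
        intro x; simp [smul_eq_mul]; ring
      rw [show (fun x => g x • (G x - c)) = fun x => g x * G x - g x * c from funext this]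
      rw [integral_sub hgG (hgint.mul_const c), hkey, integral_mul_const, sub_self]
  filter_upwards [key] with x hx
  rw [sub_eq_zero] at hx
  simpa using hx


/-- Integration by parts against a primitive, via Fubini. -/
lemma parts {w : ℝ → ℝ} (hw : Measurable w) {C : ℝ} (hC : ∀ ξ, |w ξ| ≤ C)
    {ψ : ℝ → ℝ} (hψ : ContDiff ℝ 1 ψ) (hcs : HasCompactSupport ψ) :
    ∫ ξ : ℝ, ψ ξ * w ξ = - ∫ ξ : ℝ, deriv ψ ξ * (∫ t in (0:ℝ)..ξ, w t) := by
  classical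
  have hψc : Continuous ψ := hψ.continuous
  have hdc : Continuous (deriv ψ) := hψ.continuous_deriv le_rfl
  obtain ⟨R₀, hR₀⟩ := hcs.isBounded.subset_closedBall 0
  rw [Real.closedBall_eq_Icc] at hR₀
  set b : ℝ := |R₀| + 1 with hb
  set a : ℝ := -b with ha
  have hab : a < b := by
    have : 0 < b := by positivity
    simp only [ha]; linarith
  have hts : tsupport ψ ⊆ Set.Ioo a b := by
    refine hR₀.trans ?_
    intro x hx
    simp only [zero_sub, zero_add, Set.mem_Icc] at hx
    constructor
    · simp only [ha, hb]; have := le_abs_self R₀; linarith [hx.1]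
    · simp only [hb]; have := le_abs_self R₀; linarith [hx.2]
  have hψa : ψ a = 0 := by
    apply image_eq_zero_of_notMem_tsupport
    intro hmem; exact absurd (hts hmem).1 (lt_irrefl a)
  have hdψ0 : ∀ t, t ∉ Set.Icc a b → deriv ψ t = 0 := by
    intro t ht
    have : t ∉ Function.support (deriv ψ) := by
      intro hmem
      exact ht (Set.Ioo_subset_Icc_self (hts (support_deriv_subset hmem)))
    simpa using Function.notMem_support.mp this
  obtain ⟨M, hM⟩ := hdc.bounded_above_of_compact_support hcs.deriv
  have hM0 : 0 ≤ M := le_trans (norm_nonneg _) (hM 0)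
  have hC0 : 0 ≤ C := le_trans (abs_nonneg _) (hC 0)
  have hwInt : ∀ p q : ℝ, IntervalIntegrable w volume p q := by
    intro p q
    rw [intervalIntegrable_iff]
    refine Integrable.mono' (g := fun _ => C)
      (integrableOn_const ?_) hw.aestronglyMeasurable.restrict
      (Filter.Eventually.of_forall fun x => by simpa using hC x)
    rw [Set.uIoc]; exact measure_Ioc_lt_top.ne
  set W : ℝ → ℝ := fun ξ => ∫ t in (0:ℝ)..ξ, w t with hW
  have hWcont : Continuous W := intervalIntegral.continuous_primitive (fun p q => hwInt p q) 0
  set K : Set ℝ := Set.Icc a b with hK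
  set μK : Measure ℝ := volume.restrict K with hμK
  haveI : IsFiniteMeasure μK := ⟨by
    rw [hμK, Measure.restrict_apply_univ]; exact measure_Icc_lt_top⟩
  set F : ℝ → ℝ → ℝ := fun t ξ => if t ≤ ξ then deriv ψ t * w ξ else 0 with hF
  have hFmeas : Measurable (Function.uncurry F) := by
    apply Measurable.ite (measurableSet_le measurable_fst measurable_snd)
    · exact ((hdc.measurable.comp measurable_fst).mul (hw.comp measurable_snd))
    · exact measurable_const
  have hFint : Integrable (Function.uncurry F) (μK.prod μK) := by
    refine Integrable.mono' (g := fun _ => M * C) (integrable_const _)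
      hFmeas.aestronglyMeasurable (Filter.Eventually.of_forall ?_)
    rintro ⟨t, ξ⟩
    show ‖if t ≤ ξ then deriv ψ t * w ξ else 0‖ ≤ M * C
    by_cases h : t ≤ ξ
    · simp only [h, if_true]
      rw [Real.norm_eq_abs, abs_mul]
      exact mul_le_mul (by simpa [Real.norm_eq_abs] using hM t) (hC ξ) (abs_nonneg _) hM0
    · simp only [h, if_false, norm_zero]
      positivity
  have hswap : ∫ t, (∫ ξ, F t ξ ∂μK) ∂μK = ∫ ξ, (∫ t, F t ξ ∂μK) ∂μK :=
    integral_integral_swap hFint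
  -- RHS is ∫ ψ w
  have hRHS : ∫ ξ, (∫ t, F t ξ ∂μK) ∂μK = ∫ ξ : ℝ, ψ ξ * w ξ := by
    have h1 : ∀ ξ ∈ K, (∫ t, F t ξ ∂μK) = ψ ξ * w ξ := by
      intro ξ hξ
      have heq : (fun t => F t ξ) = (Set.Iic ξ).indicator (fun t => deriv ψ t * w ξ) := by
        funext t; by_cases h : t ≤ ξ <;> simp [hF, Set.indicator, h]
      rw [heq, hμK, MeasureTheory.setIntegral_indicator measurableSet_Iic]
      have hKI : K ∩ Set.Iic ξ = Set.Icc a ξ := by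
        ext t
        simp only [hK, Set.mem_inter_iff, Set.mem_Icc, Set.mem_Iic]
        constructor
        · rintro ⟨⟨h1, h2⟩, h3⟩; exact ⟨h1, h3⟩
        · rintro ⟨h1, h2⟩; exact ⟨⟨h1, le_trans h2 hξ.2⟩, h2⟩
      rw [hKI, MeasureTheory.integral_Icc_eq_integral_Ioc,
        ← intervalIntegral.integral_of_le hξ.1,
        intervalIntegral.integral_mul_const,
        intervalIntegral.integral_eq_sub_of_hasDerivAt
          (fun x _ => ((hψ.differentiable one_ne_zero) x).hasDerivAt)
          (hdc.intervalIntegrable _ _), hψa, sub_zero]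
    rw [hμK, MeasureTheory.setIntegral_congr_fun measurableSet_Icc h1]
    apply MeasureTheory.setIntegral_eq_integral_of_forall_compl_eq_zero
    intro ξ hξ
    have : ψ ξ = 0 := by
      apply image_eq_zero_of_notMem_tsupport
      intro hmem
      exact hξ (Set.Ioo_subset_Icc_self (hts hmem))
    rw [this, zero_mul]
  -- LHS is ∫ dψ (W b - W ·)
  have hLHS : ∫ t, (∫ ξ, F t ξ ∂μK) ∂μK = ∫ t : ℝ, deriv ψ t * (W b - W t) := by
    have h1 : ∀ t ∈ K, (∫ ξ, F t ξ ∂μK) = deriv ψ t * (W b - W t) := by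
      intro t ht
      have heq : (fun ξ => F t ξ) = (Set.Ici t).indicator (fun ξ => deriv ψ t * w ξ) := by
        funext ξ; by_cases h : t ≤ ξ <;> simp [hF, Set.indicator, h]
      rw [heq, hμK, MeasureTheory.setIntegral_indicator measurableSet_Ici]
      have hKI : K ∩ Set.Ici t = Set.Icc t b := by
        ext ξ
        simp only [hK, Set.mem_inter_iff, Set.mem_Icc, Set.mem_Ici]
        constructor
        · rintro ⟨⟨h1, h2⟩, h3⟩; exact ⟨h3, h2⟩
        · rintro ⟨h1, h2⟩; exact ⟨⟨le_trans ht.1 h1, h2⟩, h1⟩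
      rw [hKI, MeasureTheory.integral_Icc_eq_integral_Ioc,
        ← intervalIntegral.integral_of_le ht.2,
        intervalIntegral.integral_const_mul]
      congr 1
      have hadd := intervalIntegral.integral_add_adjacent_intervals (hwInt 0 t) (hwInt t b)
      have : W t + ∫ ξ in t..b, w ξ = W b := hadd
      linarith
    rw [hμK, MeasureTheory.setIntegral_congr_fun measurableSet_Icc h1]
    apply MeasureTheory.setIntegral_eq_integral_of_forall_compl_eq_zero
    intro t ht
    rw [hdψ0 t ht, zero_mul]
  -- put it together
  have hint1 : Integrable (fun t => deriv ψ t * W b) volume := by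
    apply Continuous.integrable_of_hasCompactSupport (hdc.mul continuous_const)
    exact hcs.deriv.mul_right
  have hint2 : Integrable (fun t => deriv ψ t * W t) volume := by
    apply Continuous.integrable_of_hasCompactSupport (hdc.mul hWcont)
    exact hcs.deriv.mul_right
  have hfinal : ∫ t : ℝ, deriv ψ t * (W b - W t)
      = (∫ t : ℝ, deriv ψ t) * W b - ∫ t : ℝ, deriv ψ t * W t := by
    rw [← integral_mul_const]
    rw [← integral_sub hint1 hint2]
    congr 1; funext t; ring
  have hzero : (∫ t : ℝ, deriv ψ t) = 0 := integral_deriv_cs hψ hcs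
  rw [← hRHS, ← hswap, hLHS, hfinal, hzero, zero_mul, zero_sub]


lemma abs_dot_le (x y : Fin n → ℝ) : |x ⬝ᵥ y| ≤ n * ‖x‖ * ‖y‖ := by
  calc |x ⬝ᵥ y| = |∑ i, x i * y i| := rfl
    _ ≤ ∑ i, |x i * y i| := Finset.abs_sum_le_sum_abs _ _
    _ ≤ ∑ _i : Fin n, ‖x‖ * ‖y‖ := by
        refine Finset.sum_le_sum fun i _ => ?_
        rw [abs_mul]
        refine mul_le_mul ?_ ?_ (abs_nonneg _) (norm_nonneg _)
        · exact (norm_le_pi_norm x i)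
        · exact (norm_le_pi_norm y i)
    _ = n * ‖x‖ * ‖y‖ := by
        rw [Finset.sum_const, Finset.card_univ, Fintype.card_fin, nsmul_eq_mul, mul_assoc]

lemma meas_dot {a b : ℝ → Fin n → ℝ} (ha : Measurable a) (hb : Measurable b) :
    Measurable fun ξ => a ξ ⬝ᵥ b ξ := by
  show Measurable fun ξ => ∑ i, a ξ i * b ξ i
  exact Finset.measurable_sum _ fun i _ =>
    ((measurable_pi_apply i).comp ha).mul ((measurable_pi_apply i).comp hb)

lemma cont_dot {a b : ℝ → Fin n → ℝ} (ha : Continuous a) (hb : Continuous b) :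
    Continuous fun ξ => a ξ ⬝ᵥ b ξ := by
  show Continuous fun ξ => ∑ i, a ξ i * b ξ i
  exact continuous_finset_sum _ fun i _ =>
    ((continuous_apply i).comp ha).mul ((continuous_apply i).comp hb)

lemma ae_prod_fst {P : ℝ → Prop} (h : ∀ᵐ x : ℝ ∂volume, P x) :
    ∀ᵐ q : ℝ × ℝ ∂volume, P q.1 := by
  rw [MeasureTheory.ae_iff] at h ⊢
  rw [Measure.volume_eq_prod]
  refine measure_mono_null (t := toMeasurable volume {x | ¬ P x} ×ˢ Set.univ)
    (fun q hq => ⟨subset_toMeasurable _ _ hq, Set.mem_univ _⟩) ?_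
  rw [Measure.prod_prod, measure_toMeasurable, h, zero_mul]

lemma ae_prod_snd {P : ℝ → Prop} (h : ∀ᵐ x : ℝ ∂volume, P x) :
    ∀ᵐ q : ℝ × ℝ ∂volume, P q.2 := by
  rw [MeasureTheory.ae_iff] at h ⊢
  rw [Measure.volume_eq_prod]
  refine measure_mono_null (t := Set.univ ×ˢ toMeasurable volume {x | ¬ P x})
    (fun q hq => ⟨Set.mem_univ _, subset_toMeasurable _ _ hq⟩) ?_
  rw [Measure.prod_prod, measure_toMeasurable, h, mul_zero]

/-- component facts for a C¹ compactly supported vector test function -/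
lemma comp_facts {ψ : ℝ → Fin n → ℝ} (hψ : ContDiff ℝ 1 ψ) (hcs : HasCompactSupport ψ)
    (i : Fin n) :
    ContDiff ℝ 1 (fun ξ => ψ ξ i) ∧ HasCompactSupport (fun ξ => ψ ξ i) ∧
      ∀ ξ, deriv (fun ξ => ψ ξ i) ξ = deriv ψ ξ i := by
  refine ⟨((ContinuousLinearMap.proj (R := ℝ) (φ := fun _ : Fin n => ℝ) i).contDiff).comp hψ,
    hcs.comp_left (g := fun y : Fin n → ℝ => y i) rfl, fun ξ => ?_⟩
  have hd : HasDerivAt ψ (deriv ψ ξ) ξ := ((hψ.differentiable one_ne_zero) ξ).hasDerivAt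
  have := ((ContinuousLinearMap.proj (R := ℝ) (φ := fun _ : Fin n => ℝ) i).hasFDerivAt).comp_hasDerivAt ξ hd
  exact this.deriv


end SSAux

/-- A reduced state function is a self-similar weak solution iff the
integral equation `M(v(ζ), ξ, v(ξ))(v(ξ) − v(ζ)) + ∫_ζ^ξ (v(ξ') − v(ζ)) dξ' = 0` holds
for a.e. `(ζ, ξ) ∈ ℝ²`. -/
theorem isSSWeakSol_iff_integral_equation
    {n : ℕ} (U : Set (Fin n → ℝ)) (hU : IsOpen U)
    (f : (Fin n → ℝ) → (Fin n → ℝ)) (hf : ContDiffOn ℝ 2 f U)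
    (hconv : convexHull ℝ (USH f U) ⊆ U)
    (v : ℝ → (Fin n → ℝ)) (hv : IsReducedState f U v) :
    IsSSWeakSol f v ↔
      ∀ᵐ q : ℝ × ℝ ∂volume,
        (Mmat f (v q.1) q.2 (v q.2)) (v q.2 - v q.1)
          + (∫ t in q.1..q.2, (v t - v q.1)) = 0 := by
  classical
  obtain ⟨hmeas, ⟨C, hC⟩, hSsub⟩ := hv
  obtain ⟨z₀, hz₀⟩ := SSAux.essim_nonempty v
  have hSbd : ∀ z ∈ essimOn v Set.univ, ‖z‖ ≤ C := SSAux.essim_bounded v hC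
  have hSclosed : IsClosed (essimOn v Set.univ) := SSAux.isClosed_essim v
  have haev : ∀ᵐ ξ : ℝ ∂volume, v ξ ∈ essimOn v Set.univ := SSAux.ae_mem_essim v
  set S : Set (Fin n → ℝ) := essimOn v Set.univ with hSdef
  set w : ℝ → (Fin n → ℝ) := fun ξ => if v ξ ∈ S then v ξ else z₀ with hwdef
  have hwS : ∀ ξ, w ξ ∈ S := fun ξ => by
    by_cases h : v ξ ∈ S
    · simpa only [hwdef, if_pos h] using h
    · simpa only [hwdef, if_neg h] using hz₀
  have hvw : v =ᵐ[volume] w := by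
    filter_upwards [haev] with ξ h
    simp only [hwdef, if_pos h]
  have hwmeas : Measurable w :=
    Measurable.ite (hSclosed.measurableSet.preimage hmeas) hmeas measurable_const
  have hwC : ∀ ξ, ‖w ξ‖ ≤ C := fun ξ => hSbd _ (hwS ξ)
  have hC0 : (0:ℝ) ≤ C := le_trans (norm_nonneg _) (hwC 0)
  have hSU : S ⊆ U := fun z hz => (hSsub hz).1
  have hfc : ContinuousOn f S := (hf.continuousOn).mono hSU
  have hfw_meas : Measurable (fun ξ => f (w ξ)) := by
    have heq : (fun ξ => f (w ξ)) = (S.restrict f) ∘ (fun ξ => (⟨w ξ, hwS ξ⟩ : S)) := rfl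
    rw [heq]
    exact hfc.restrict.measurable.comp (hwmeas.subtype_mk)
  have hScompact : IsCompact S := by
    rw [Metric.isCompact_iff_isClosed_bounded]
    exact ⟨hSclosed, isBounded_iff_forall_norm_le.2 ⟨C, hSbd⟩⟩
  obtain ⟨Cf, hCf⟩ := hScompact.exists_bound_of_continuousOn hfc
  have hCf0 : (0:ℝ) ≤ Cf := le_trans (norm_nonneg _) (hCf z₀ hz₀)
  -- interval integrability of w and v
  have hwiInt : ∀ p q : ℝ, IntervalIntegrable w volume p q := by
    intro p q
    rw [intervalIntegrable_iff]
    refine Integrable.mono' (g := fun _ => C) (integrableOn_const ?_)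
      hwmeas.aestronglyMeasurable.restrict (Filter.Eventually.of_forall fun x => hwC x)
    rw [Set.uIoc]; exact measure_Ioc_lt_top.ne
  have hviInt : ∀ p q : ℝ, IntervalIntegrable v volume p q := fun p q =>
    ⟨(hwiInt p q).1.congr (ae_restrict_of_ae hvw.symm),
     (hwiInt p q).2.congr (ae_restrict_of_ae hvw.symm)⟩
  -- primitive and G
  set W : ℝ → (Fin n → ℝ) := fun ξ => ∫ t in (0:ℝ)..ξ, w t with hWdef
  have hWcont : Continuous W := intervalIntegral.continuous_primitive hwiInt 0
  set g' : ℝ → (Fin n → ℝ) := fun ξ => (-ξ) • w ξ + f (w ξ) with hg'def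
  have hg'meas : Measurable g' :=
    ((measurable_id.neg).smul hwmeas).add hfw_meas
  set G : ℝ → (Fin n → ℝ) := fun ξ => g' ξ + W ξ with hGdef
  have hGmeas : Measurable G := hg'meas.add hWcont.measurable
  have hg'bd : ∀ (R : ℝ), ∀ ξ ∈ Set.Icc (-R) R, ‖g' ξ‖ ≤ R * C + Cf := by
    intro R ξ hξ
    have h1 : |ξ| ≤ R := abs_le.2 ⟨hξ.1, hξ.2⟩
    calc ‖g' ξ‖ ≤ ‖(-ξ) • w ξ‖ + ‖f (w ξ)‖ := norm_add_le _ _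
      _ ≤ R * C + Cf := by
          rw [norm_smul]
          have h2 : ‖-ξ‖ ≤ R := by rw [norm_neg, Real.norm_eq_abs]; exact h1
          exact add_le_add
            (mul_le_mul h2 (hwC ξ) (norm_nonneg _) (le_trans (abs_nonneg ξ) h1))
            (hCf _ (hwS ξ))
  -- local integrability of G
  have hGloc : LocallyIntegrable G volume := by
    rw [locallyIntegrable_iff]
    intro K hK
    obtain ⟨R, hR⟩ := hK.isBounded.subset_closedBall 0
    rw [Real.closedBall_eq_Icc, zero_sub, zero_add] at hR
    obtain ⟨MW, hMW⟩ := (isCompact_Icc (a := -R) (b := R)).exists_bound_of_continuousOn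
      hWcont.continuousOn
    refine Integrable.mono' (g := fun _ => R * C + Cf + MW)
      (integrableOn_const hK.measure_lt_top.ne)
      hGmeas.aestronglyMeasurable.restrict ?_
    rw [MeasureTheory.ae_restrict_iff' hK.measurableSet]
    refine Filter.Eventually.of_forall fun ξ hξ => ?_
    calc ‖G ξ‖ ≤ ‖g' ξ‖ + ‖W ξ‖ := norm_add_le _ _
      _ ≤ (R * C + Cf) + MW := add_le_add (hg'bd R ξ (hR hξ)) (hMW ξ (hR hξ))
  -- KEY REWRITE for test functions
  have key : ∀ ψ : ℝ → (Fin n → ℝ), ContDiff ℝ 1 ψ → HasCompactSupport ψ →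
      (∫ ξ : ℝ, ((deriv ψ ξ) ⬝ᵥ ((-ξ) • v ξ + f (v ξ)) - (ψ ξ) ⬝ᵥ (v ξ)))
        = ∫ ξ : ℝ, (deriv ψ ξ) ⬝ᵥ G ξ := by
    intro ψ hψ hcs
    have hfacts := fun i => SSAux.comp_facts hψ hcs i
    obtain ⟨R₀, hR₀⟩ := hcs.isBounded.subset_closedBall 0
    rw [Real.closedBall_eq_Icc, zero_sub, zero_add] at hR₀
    set R : ℝ := |R₀| + 1 with hRdef
    have hR0 : (0:ℝ) ≤ R := by positivity
    have htsupp : tsupport ψ ⊆ Set.Icc (-R) R := by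
      refine hR₀.trans (Set.Icc_subset_Icc ?_ ?_)
      · simp only [hRdef]; have := le_abs_self R₀; linarith
      · simp only [hRdef]; have := le_abs_self R₀; linarith
    obtain ⟨Mψ, hMψ⟩ := hψ.continuous.bounded_above_of_compact_support hcs
    obtain ⟨Md, hMd⟩ := (hψ.continuous_deriv le_rfl).bounded_above_of_compact_support hcs.deriv
    have hMψ0 : (0:ℝ) ≤ Mψ := le_trans (norm_nonneg _) (hMψ 0)
    have hMd0 : (0:ℝ) ≤ Md := le_trans (norm_nonneg _) (hMd 0)
    have hψ0 : ∀ ξ, ξ ∉ Set.Icc (-R) R → ψ ξ = 0 := fun ξ h =>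
      image_eq_zero_of_notMem_tsupport (fun hm => h (htsupp hm))
    have hdψ0 : ∀ ξ, ξ ∉ Set.Icc (-R) R → deriv ψ ξ = 0 := fun ξ h => by
      have hns : ξ ∉ Function.support (deriv ψ) := fun hm => h (htsupp (support_deriv_subset hm))
      simpa using Function.notMem_support.mp hns
    -- integrability facts
    have hI1 : Integrable (fun ξ : ℝ => (deriv ψ ξ) ⬝ᵥ g' ξ) volume := by
      refine SSAux.integrable_of_bound_on_support (a := -R) (b := R)
        (M := n * Md * (R * C + Cf))
        (SSAux.meas_dot (hψ.continuous_deriv le_rfl).measurable hg'meas).aestronglyMeasurable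
        (fun x hx => by rw [hdψ0 x hx, zero_dotProduct]) (fun x => ?_)
      by_cases hx : x ∈ Set.Icc (-R) R
      · refine le_trans (SSAux.abs_dot_le _ _) ?_
        exact mul_le_mul
          (mul_le_mul le_rfl (hMd x) (norm_nonneg _) (by positivity))
          (hg'bd R x hx) (norm_nonneg _) (by positivity)
      · rw [hdψ0 x hx, zero_dotProduct, abs_zero]
        positivity
    have hI2 : Integrable (fun ξ : ℝ => (ψ ξ) ⬝ᵥ w ξ) volume := by
      refine SSAux.integrable_of_bound_on_support (a := -R) (b := R) (M := n * Mψ * C)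
        (SSAux.meas_dot hψ.continuous.measurable hwmeas).aestronglyMeasurable
        (fun x hx => by rw [hψ0 x hx, zero_dotProduct]) (fun x => ?_)
      refine le_trans (SSAux.abs_dot_le _ _) ?_
      exact mul_le_mul
        (mul_le_mul le_rfl (hMψ x) (norm_nonneg _) (by positivity))
        (hwC x) (norm_nonneg _) (by positivity)
    have hI2i : ∀ i : Fin n, Integrable (fun ξ : ℝ => ψ ξ i * w ξ i) volume := by
      intro i
      refine SSAux.integrable_of_bound_on_support (a := -R) (b := R) (M := Mψ * C)
        (((measurable_pi_apply i).comp hψ.continuous.measurable).mul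
          ((measurable_pi_apply i).comp hwmeas)).aestronglyMeasurable
        (fun x hx => by rw [hψ0 x hx]; simp) (fun x => ?_)
      rw [abs_mul]
      exact mul_le_mul (le_trans (norm_le_pi_norm (ψ x) i) (hMψ x))
        (le_trans (norm_le_pi_norm (w x) i) (hwC x)) (abs_nonneg _) hMψ0
    have hI3 : Integrable (fun ξ : ℝ => (deriv ψ ξ) ⬝ᵥ W ξ) volume := by
      refine Continuous.integrable_of_hasCompactSupport
        (SSAux.cont_dot (hψ.continuous_deriv le_rfl) hWcont) ?_
      refine HasCompactSupport.intro (isCompact_Icc (a := -R) (b := R)) fun x hx => ?_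
      rw [hdψ0 x hx, zero_dotProduct]
    have hI3i : ∀ i : Fin n, Integrable
        (fun ξ : ℝ => deriv (fun s => ψ s i) ξ * W ξ i) volume := by
      intro i
      refine Continuous.integrable_of_hasCompactSupport
        (((hfacts i).1.continuous_deriv le_rfl).mul ((continuous_apply i).comp hWcont)) ?_
      exact ((hfacts i).2.1.deriv).mul_right
    -- chain of equalities
    have step1 : (∫ ξ : ℝ, ((deriv ψ ξ) ⬝ᵥ ((-ξ) • v ξ + f (v ξ)) - (ψ ξ) ⬝ᵥ (v ξ)))
        = ∫ ξ : ℝ, ((deriv ψ ξ) ⬝ᵥ g' ξ - (ψ ξ) ⬝ᵥ (w ξ)) := by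
      apply integral_congr_ae
      filter_upwards [hvw] with ξ h
      rw [h]
    have step2 : (∫ ξ : ℝ, ((deriv ψ ξ) ⬝ᵥ g' ξ - (ψ ξ) ⬝ᵥ (w ξ)))
        = (∫ ξ : ℝ, (deriv ψ ξ) ⬝ᵥ g' ξ) - ∫ ξ : ℝ, (ψ ξ) ⬝ᵥ w ξ :=
      integral_sub hI1 hI2
    have step3 : (∫ ξ : ℝ, (ψ ξ) ⬝ᵥ w ξ) = - ∫ ξ : ℝ, (deriv ψ ξ) ⬝ᵥ W ξ := by
      have e1 : (∫ ξ : ℝ, (ψ ξ) ⬝ᵥ w ξ) = ∑ i, ∫ ξ : ℝ, ψ ξ i * w ξ i := by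
        rw [← MeasureTheory.integral_finset_sum _ (fun i _ => hI2i i)]
        rfl
      have e2 : ∀ i : Fin n, (∫ ξ : ℝ, ψ ξ i * w ξ i)
          = - ∫ ξ : ℝ, deriv (fun s => ψ s i) ξ * W ξ i := by
        intro i
        have hparts := SSAux.parts ((measurable_pi_apply i).comp hwmeas)
          (C := C) (fun ξ => le_trans (norm_le_pi_norm (w ξ) i) (hwC ξ))
          (hfacts i).1 (hfacts i).2.1
        have hWi : ∀ ξ : ℝ, (∫ t in (0:ℝ)..ξ, w t i) = W ξ i := fun ξ =>
          ContinuousLinearMap.intervalIntegral_comp_comm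
            (ContinuousLinearMap.proj (R := ℝ) (φ := fun _ : Fin n => ℝ) i) (hwiInt 0 ξ)
        have hre : (fun ξ : ℝ => deriv (fun s => ψ s i) ξ * W ξ i)
            = fun ξ : ℝ => deriv (fun s => ψ s i) ξ * ∫ t in (0:ℝ)..ξ, w t i :=
          funext fun ξ => by rw [hWi]
        rw [hre]
        exact hparts
      have e3 : ∑ i : Fin n, (- ∫ ξ : ℝ, deriv (fun s => ψ s i) ξ * W ξ i)
          = - ∫ ξ : ℝ, (deriv ψ ξ) ⬝ᵥ W ξ := by
        rw [Finset.sum_neg_distrib, ← MeasureTheory.integral_finset_sum _ (fun i _ => hI3i i)]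
        congr 1
        refine integral_congr_ae (Filter.Eventually.of_forall fun ξ => ?_)
        show ∑ i, deriv (fun s => ψ s i) ξ * W ξ i = ∑ i, deriv ψ ξ i * W ξ i
        exact Finset.sum_congr rfl fun i _ => by rw [(hfacts i).2.2 ξ]
      rw [e1, Finset.sum_congr rfl (fun i _ => e2 i), e3]
    have step4 : (∫ ξ : ℝ, (deriv ψ ξ) ⬝ᵥ g' ξ) + (∫ ξ : ℝ, (deriv ψ ξ) ⬝ᵥ W ξ)
        = ∫ ξ : ℝ, (deriv ψ ξ) ⬝ᵥ G ξ := by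
      rw [← integral_add hI1 hI3]
      refine integral_congr_ae (Filter.Eventually.of_forall fun ξ => ?_)
      show deriv ψ ξ ⬝ᵥ g' ξ + deriv ψ ξ ⬝ᵥ W ξ = deriv ψ ξ ⬝ᵥ G ξ
      rw [hGdef]
      exact (dotProduct_add _ _ _).symm
    rw [step1, step2, step3, sub_neg_eq_add, step4]
  have hE1 : IsSSWeakSol f v ↔
      (∀ ψ : ℝ → (Fin n → ℝ), ContDiff ℝ 1 ψ → HasCompactSupport ψ →
        ∫ ξ : ℝ, (deriv ψ ξ) ⬝ᵥ G ξ = 0) := by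
    refine forall_congr' fun ψ => ?_
    constructor
    · intro h h1 h2; rw [← key ψ h1 h2]; exact h h1 h2
    · intro h h1 h2; rw [key ψ h1 h2]; exact h h1 h2
  have hE2 : (∀ ψ : ℝ → (Fin n → ℝ), ContDiff ℝ 1 ψ → HasCompactSupport ψ →
      ∫ ξ : ℝ, (deriv ψ ξ) ⬝ᵥ G ξ = 0) ↔ ∃ c : Fin n → ℝ, ∀ᵐ ξ : ℝ ∂volume, G ξ = c := by
    constructor
    · intro hyp
      have hGiloc : ∀ i : Fin n, LocallyIntegrable (fun ξ => G ξ i) volume := by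
        intro i
        rw [locallyIntegrable_iff]
        intro K hK
        refine MeasureTheory.Integrable.mono (hGloc.integrableOn_isCompact hK)
          ((measurable_pi_apply i).comp hGmeas).aestronglyMeasurable.restrict
          (Filter.Eventually.of_forall fun ξ => ?_)
        exact norm_le_pi_norm (G ξ) i
      have hcomp : ∀ i : Fin n, ∃ c : ℝ, ∀ᵐ ξ : ℝ ∂volume, G ξ i = c := by
        intro i
        apply SSAux.ae_const_of_integral_deriv_mul (hGiloc i)
        intro h hh hhc
        set ψ : ℝ → (Fin n → ℝ) := fun ξ => h ξ • (Pi.single i 1 : Fin n → ℝ) with hψdef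
        have hψC1 : ContDiff ℝ 1 ψ := hh.smul contDiff_const
        have hψcs : HasCompactSupport ψ :=
          hhc.comp_left (g := fun r : ℝ => r • (Pi.single i 1 : Fin n → ℝ)) (by simp)
        have hder : ∀ ξ, deriv ψ ξ = deriv h ξ • (Pi.single i 1 : Fin n → ℝ) := fun ξ =>
          (((hh.differentiable one_ne_zero) ξ).hasDerivAt.smul_const _).deriv
        have h0 := hyp ψ hψC1 hψcs
        rw [show (fun ξ : ℝ => (deriv ψ ξ) ⬝ᵥ G ξ) = fun ξ => deriv h ξ * G ξ i from
          funext fun ξ => by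
            rw [hder ξ, smul_dotProduct, single_dotProduct, one_mul,
              smul_eq_mul]] at h0
        exact h0
      choose c hc using hcomp
      refine ⟨c, ?_⟩
      filter_upwards [(MeasureTheory.ae_all_iff).2 hc] with ξ hξ
      funext i
      exact hξ i
    · rintro ⟨c, hc⟩ ψ hψ hcs
      have hfacts := fun i => SSAux.comp_facts hψ hcs i
      have hcong : ∫ ξ : ℝ, (deriv ψ ξ) ⬝ᵥ G ξ = ∫ ξ : ℝ, (deriv ψ ξ) ⬝ᵥ c := by
        apply integral_congr_ae
        filter_upwards [hc] with ξ h
        rw [h]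
      rw [hcong]
      have hrw : (fun ξ : ℝ => (deriv ψ ξ) ⬝ᵥ c)
          = fun ξ => ∑ i, deriv (fun s => ψ s i) ξ * c i := by
        funext ξ
        show ∑ i, deriv ψ ξ i * c i = _
        exact Finset.sum_congr rfl fun i _ => by rw [(hfacts i).2.2 ξ]
      rw [hrw, MeasureTheory.integral_finset_sum]
      · refine Finset.sum_eq_zero fun i _ => ?_
        rw [integral_mul_const, SSAux.integral_deriv_cs (hfacts i).1 (hfacts i).2.1, zero_mul]
      · intro i _
        apply Integrable.mul_const
        exact ((hfacts i).1.continuous_deriv le_rfl).integrable_of_hasCompactSupport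
          (hfacts i).2.1.deriv
  have hE3 : (∃ c : Fin n → ℝ, ∀ᵐ ξ : ℝ ∂volume, G ξ = c) ↔
      (∀ᵐ q : ℝ × ℝ ∂volume, G q.2 = G q.1) := by
    constructor
    · rintro ⟨c, hc⟩
      filter_upwards [SSAux.ae_prod_fst hc, SSAux.ae_prod_snd hc] with q h1 h2
      rw [h1, h2]
    · intro h
      rw [Measure.volume_eq_prod] at h
      have h2 := Measure.ae_ae_of_ae_prod h
      haveI : (MeasureTheory.ae (volume : Measure ℝ)).NeBot :=
        ae_neBot.2 (by simp [← MeasureTheory.Measure.measure_univ_eq_zero, Real.volume_univ])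
      obtain ⟨x, hx⟩ := h2.exists
      exact ⟨G x, hx⟩
  have hE4 : (∀ᵐ q : ℝ × ℝ ∂volume, G q.2 = G q.1) ↔
      (∀ᵐ q : ℝ × ℝ ∂volume,
        (Mmat f (v q.1) q.2 (v q.2)) (v q.2 - v q.1)
          + (∫ t in q.1..q.2, (v t - v q.1)) = 0) := by
    have hgood : ∀ᵐ q : ℝ × ℝ ∂volume,
        (G q.2 = G q.1 ↔ (Mmat f (v q.1) q.2 (v q.2)) (v q.2 - v q.1)
          + (∫ t in q.1..q.2, (v t - v q.1)) = 0) := by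
      have h1 : ∀ᵐ ξ : ℝ ∂volume, v ξ ∈ S ∧ v ξ = w ξ := by
        filter_upwards [haev, hvw] with ξ ha hb
        exact ⟨ha, hb⟩
      filter_upwards [SSAux.ae_prod_fst h1, SSAux.ae_prod_snd h1] with q hq1 hq2
      obtain ⟨hm1, he1⟩ := hq1
      obtain ⟨hm2, he2⟩ := hq2
      have hseg : ∀ τ : ℝ, τ ∈ Set.Icc (0:ℝ) 1 → (1 - τ) • v q.1 + τ • v q.2 ∈ U := by
        intro τ hτ
        apply hconv
        refine segment_subset_convexHull (hSsub hm1) (hSsub hm2) ?_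
        exact ⟨1 - τ, τ, by linarith [hτ.2], hτ.1, by ring, rfl⟩
      have hM := SSAux.mmat_apply hU hf hseg q.2
      have hIv : (∫ t in q.1..q.2, (v t - v q.1))
          = (W q.2 - W q.1) - (q.2 - q.1) • v q.1 := by
        rw [intervalIntegral.integral_sub (hviInt _ _) intervalIntegrable_const,
          intervalIntegral.integral_const]
        congr 1
        have hcg : (∫ t in q.1..q.2, v t) = ∫ t in q.1..q.2, w t :=
          intervalIntegral.integral_congr_ae (hvw.mono fun x hx _ => hx)
        have hadd := intervalIntegral.integral_add_adjacent_intervals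
          (hwiInt 0 q.1) (hwiInt q.1 q.2)
        rw [hcg]
        exact eq_sub_of_add_eq' hadd
      rw [hM, hIv, he1, he2]
      rw [show ((-q.2) • (w q.2 - w q.1) + (f (w q.2) - f (w q.1)))
          + ((W q.2 - W q.1) - (q.2 - q.1) • w q.1)
          = G q.2 - G q.1 from by
        show _ = (((-q.2) • w q.2 + f (w q.2)) + W q.2)
          - (((-q.1) • w q.1 + f (w q.1)) + W q.1)
        module]
      exact sub_eq_zero.symm
    exact Filter.eventually_congr hgood
  rw [hE1, hE2, hE3, hE4]


end
end

section
/- Let v be a reduced state function that is a self-similar weak solution of u_t + f(u)_x = 0, and let J ⊆ ℝ be an open interval such that every point of J is an ess-im continuity point of v; let v̄ : J → ℝ^n denote the continuous representative of v on J. If det(−ξ I + A(v̄(ξ))) ≠ 0 for all ξ ∈ J, then v̄ is constant on J. -/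
open MeasureTheory Set Matrix

noncomputable section

section Aux
open Filter

variable {n : ℕ}

lemma essimOn_mono (v : ℝ → (Fin n → ℝ)) {Y Y' : Set ℝ} (h : Y ⊆ Y') :
    essimOn v Y ⊆ essimOn v Y' := by
  intro z hz V hV hzV
  exact lt_of_lt_of_le (hz V hV hzV) (measure_mono (inter_subset_inter_right _ h))

lemma isClosed_essimOn (v : ℝ → (Fin n → ℝ)) (Y : Set ℝ) : IsClosed (essimOn v Y) := by
  rw [← isOpen_compl_iff, isOpen_iff_mem_nhds]
  intro z hz
  simp only [mem_compl_iff, essimOn, mem_setOf_eq, not_forall] at hz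
  obtain ⟨V, hV, hzV, hpos⟩ := hz
  have : volume (v ⁻¹' V ∩ Y) = 0 := by
    by_contra h; exact hpos (pos_iff_ne_zero.mpr h)
  refine Filter.mem_of_superset (hV.mem_nhds hzV) ?_
  intro y hy
  simp only [mem_compl_iff, essimOn, mem_setOf_eq, not_forall]
  exact ⟨V, hV, hy, by simp [this]⟩

lemma essimOn_subset_closedBall {v : ℝ → (Fin n → ℝ)} {C : ℝ}
    (hC : ∀ᵐ ξ : ℝ, ‖v ξ‖ ≤ C) (Y : Set ℝ) :
    essimOn v Y ⊆ Metric.closedBall 0 C := by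
  intro z hz
  by_contra hzC
  have hCz : C < ‖z‖ := by
    simpa [Metric.mem_closedBall, dist_eq_norm] using hzC
  have hV : IsOpen {w : Fin n → ℝ | C < ‖w‖} := isOpen_lt continuous_const continuous_norm
  have := hz _ hV hCz
  have hnull : volume (v ⁻¹' {w : Fin n → ℝ | C < ‖w‖} ∩ Y) = 0 := by
    refine measure_mono_null (fun ξ hξ => ?_) (ae_iff.mp hC)
    simp only [mem_inter_iff, mem_preimage, mem_setOf_eq] at hξ ⊢
    exact not_le.mpr hξ.1
  exact this.ne' hnull

lemma exists_mem_essimOn_of_compact {v : ℝ → (Fin n → ℝ)} {Y : Set ℝ}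
    {K : Set (Fin n → ℝ)} (hK : IsCompact K) (hpos : 0 < volume (v ⁻¹' K ∩ Y)) :
    ∃ z ∈ K, z ∈ essimOn v Y := by
  by_contra h
  push_neg at h
  have hcov : ∀ z ∈ K, ∃ V : Set (Fin n → ℝ), IsOpen V ∧ z ∈ V ∧
      volume (v ⁻¹' V ∩ Y) = 0 := by
    intro z hzK
    have := h z hzK
    simp only [essimOn, mem_setOf_eq, not_forall] at this
    obtain ⟨V, hV, hzV, hp⟩ := this
    exact ⟨V, hV, hzV, by by_contra hne; exact hp (pos_iff_ne_zero.mpr hne)⟩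
  choose V hVopen hVmem hVnull using hcov
  have hKcov : K ⊆ ⋃ z : K, V z z.2 := by
    intro z hz
    exact mem_iUnion.mpr ⟨⟨z, hz⟩, hVmem z hz⟩
  obtain ⟨t, ht⟩ := hK.elim_finite_subcover (fun z : K => V z z.2) (fun z => hVopen z z.2) hKcov
  have hsub : v ⁻¹' K ∩ Y ⊆ ⋃ z ∈ t, (v ⁻¹' (V z z.2) ∩ Y) := by
    intro ξ hξ
    obtain ⟨hξK, hξY⟩ := hξ
    obtain ⟨z, hz, hzt, hzV⟩ := by simpa using ht hξK
    exact mem_biUnion hzt ⟨hzV, hξY⟩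
  have : volume (v ⁻¹' K ∩ Y) = 0 := by
    refine measure_mono_null hsub (measure_biUnion_null_iff t.countable_toSet |>.mpr ?_)
    intro z hz; exact hVnull z z.2
  simp [this] at hpos

lemma ae_mem_of_essimOn_subset {v : ℝ → (Fin n → ℝ)} {C : ℝ}
    (hC : ∀ᵐ ξ : ℝ, ‖v ξ‖ ≤ C) {Y : Set ℝ} {W : Set (Fin n → ℝ)} (hW : IsOpen W)
    (h : essimOn v Y ⊆ W) : ∀ᵐ η : ℝ, η ∈ Y → v η ∈ W := by
  set K := Metric.closedBall (0 : Fin n → ℝ) C \ W with hKdef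
  have hKcomp : IsCompact K :=
    (isCompact_closedBall _ _).diff hW
  have hnull : volume (v ⁻¹' K ∩ Y) = 0 := by
    by_contra hne
    obtain ⟨z, hzK, hzess⟩ := exists_mem_essimOn_of_compact hKcomp (pos_iff_ne_zero.mpr hne)
    exact hzK.2 (h hzess)
  have h1 : ∀ᵐ η : ℝ, η ∉ v ⁻¹' K ∩ Y := by
    rw [ae_iff]; simp only [not_not]; exact hnull
  filter_upwards [hC, h1] with η hη1 hη2 hηY
  by_contra hvW
  exact hη2 ⟨⟨by simpa [Metric.mem_closedBall, dist_eq_norm] using hη1, hvW⟩, hηY⟩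

lemma exists_right_nbhd {v : ℝ → (Fin n → ℝ)} {C : ℝ}
    (hC : ∀ᵐ ξ : ℝ, ‖v ξ‖ ≤ C) {ξ : ℝ} {z : Fin n → ℝ} (hR : AessR v ξ = {z})
    {W : Set (Fin n → ℝ)} (hW : IsOpen W) (hzW : z ∈ W) :
    ∃ r > (0:ℝ), essimOn v (Set.Ioo ξ (ξ + r)) ⊆ W := by
  have key : ∃ r : {r : ℝ // 0 < r}, essimOn v (Set.Ioo ξ (ξ + r.1)) ⊆ W := by
    refine exists_subset_nhds_of_isCompact' (V := fun r : {r : ℝ // 0 < r} =>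
      essimOn v (Set.Ioo ξ (ξ + r.1))) ?_ ?_ ?_ ?_
    · intro r s
      refine ⟨⟨min r.1 s.1, lt_min r.2 s.2⟩, ?_, ?_⟩ <;>
        exact essimOn_mono v (Ioo_subset_Ioo le_rfl (by simp [min_le_left, min_le_right]))
    · intro r
      exact Metric.isCompact_of_isClosed_isBounded (isClosed_essimOn v _)
        (Metric.isBounded_closedBall.subset (essimOn_subset_closedBall hC _))
    · intro r; exact isClosed_essimOn v _
    · intro x hx
      have : x ∈ AessR v ξ := by
        rw [AessR]
        simp only [mem_iInter]
        intro r hr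
        exact (mem_iInter.mp hx) ⟨r, hr⟩
      rw [hR, mem_singleton_iff] at this
      subst this
      exact hW.mem_nhds hzW
  obtain ⟨r, hr⟩ := key
  exact ⟨r.1, r.2, hr⟩

lemma exists_left_nbhd {v : ℝ → (Fin n → ℝ)} {C : ℝ}
    (hC : ∀ᵐ ξ : ℝ, ‖v ξ‖ ≤ C) {ξ : ℝ} {z : Fin n → ℝ} (hL : AessL v ξ = {z})
    {W : Set (Fin n → ℝ)} (hW : IsOpen W) (hzW : z ∈ W) :
    ∃ r > (0:ℝ), essimOn v (Set.Ioo (ξ - r) ξ) ⊆ W := by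
  have key : ∃ r : {r : ℝ // 0 < r}, essimOn v (Set.Ioo (ξ - r.1) ξ) ⊆ W := by
    refine exists_subset_nhds_of_isCompact' (V := fun r : {r : ℝ // 0 < r} =>
      essimOn v (Set.Ioo (ξ - r.1) ξ)) ?_ ?_ ?_ ?_
    · intro r s
      refine ⟨⟨min r.1 s.1, lt_min r.2 s.2⟩, ?_, ?_⟩ <;>
        exact essimOn_mono v (Ioo_subset_Ioo (by apply sub_le_sub_left; simp) le_rfl)
    · intro r
      exact Metric.isCompact_of_isClosed_isBounded (isClosed_essimOn v _)
        (Metric.isBounded_closedBall.subset (essimOn_subset_closedBall hC _))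
    · intro r; exact isClosed_essimOn v _
    · intro x hx
      have : x ∈ AessL v ξ := by
        rw [AessL]
        simp only [mem_iInter]
        intro r hr
        exact (mem_iInter.mp hx) ⟨r, hr⟩
      rw [hL, mem_singleton_iff] at this
      subst this
      exact hW.mem_nhds hzW
  obtain ⟨r, hr⟩ := key
  exact ⟨r.1, r.2, hr⟩

-- real content starts here

lemma mem_AessL_self {v vbar : ℝ → Fin n → ℝ} {ξ : ℝ}
    (h : AessL v ξ = {vbar ξ}) : vbar ξ ∈ AessL v ξ := by rw [h]; rfl

lemma AessL_subset {v : ℝ → Fin n → ℝ} {ξ r : ℝ} (hr : 0 < r) :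
    AessL v ξ ⊆ essimOn v (Set.Ioo (ξ - r) ξ) := by
  intro x hx
  exact (mem_iInter.mp ((mem_iInter.mp hx) r)) hr

lemma AessR_subset {v : ℝ → Fin n → ℝ} {ξ r : ℝ} (hr : 0 < r) :
    AessR v ξ ⊆ essimOn v (Set.Ioo ξ (ξ + r)) := by
  intro x hx
  exact (mem_iInter.mp ((mem_iInter.mp hx) r)) hr

lemma vbar_mem_essim_univ {v vbar : ℝ → Fin n → ℝ} {J : Set ℝ}
    (hcont : ∀ ξ ∈ J, AessL v ξ = {vbar ξ} ∧ AessR v ξ = {vbar ξ})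
    {ξ : ℝ} (hξ : ξ ∈ J) : vbar ξ ∈ essimOn v Set.univ :=
  essimOn_mono v (subset_univ _) (AessL_subset one_pos (mem_AessL_self (hcont ξ hξ).1))

/-- ε-δ continuity of the continuous representative on `J`. -/
lemma vbar_eps_delta {v vbar : ℝ → Fin n → ℝ} {C : ℝ}
    (hC : ∀ᵐ ξ : ℝ, ‖v ξ‖ ≤ C) {J : Set ℝ}
    (hcont : ∀ ξ ∈ J, AessL v ξ = {vbar ξ} ∧ AessR v ξ = {vbar ξ})
    {ξ : ℝ} (hξ : ξ ∈ J) {ε : ℝ} (hε : 0 < ε) :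
    ∃ δ > 0, ∀ ζ ∈ J, |ζ - ξ| < δ → ‖vbar ζ - vbar ξ‖ < ε := by
  obtain ⟨r₁, hr₁, hL⟩ := exists_left_nbhd hC (hcont ξ hξ).1
    (Metric.isOpen_ball (x := vbar ξ) (ε := ε)) (Metric.mem_ball_self hε)
  obtain ⟨r₂, hr₂, hR⟩ := exists_right_nbhd hC (hcont ξ hξ).2
    (Metric.isOpen_ball (x := vbar ξ) (ε := ε)) (Metric.mem_ball_self hε)
  refine ⟨min r₁ r₂, lt_min hr₁ hr₂, fun ζ hζJ hζ => ?_⟩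
  rcases lt_trichotomy ζ ξ with hlt | heq | hgt
  · have habs : |ζ - ξ| < r₁ := lt_of_lt_of_le hζ (min_le_left _ _)
    rw [abs_lt] at habs
    have h1 : vbar ζ ∈ essimOn v (Set.Ioo (ζ - (r₁ - (ξ - ζ))) ζ) :=
      AessL_subset (by linarith) (mem_AessL_self (hcont ζ hζJ).1)
    have h2 : essimOn v (Set.Ioo (ζ - (r₁ - (ξ - ζ))) ζ) ⊆ essimOn v (Set.Ioo (ξ - r₁) ξ) := by
      refine essimOn_mono v (Ioo_subset_Ioo ?_ hlt.le)
      linarith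
    have := hL (h2 h1)
    rwa [Metric.mem_ball, dist_eq_norm] at this
  · rw [heq]; simpa using hε
  · have h1 : vbar ζ ∈ essimOn v (Set.Ioo (ζ - (ζ - ξ)) ζ) :=
      AessL_subset (by linarith) (mem_AessL_self (hcont ζ hζJ).1)
    have h2 : essimOn v (Set.Ioo (ζ - (ζ - ξ)) ζ) ⊆ essimOn v (Set.Ioo ξ (ξ + r₂)) := by
      refine essimOn_mono v (Ioo_subset_Ioo (by linarith) ?_)
      have : |ζ - ξ| < r₂ := lt_of_lt_of_le hζ (min_le_right _ _)
      rw [abs_lt] at this; linarith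
    have := hR (h2 h1)
    rwa [Metric.mem_ball, dist_eq_norm] at this

lemma vbar_continuousOn {v vbar : ℝ → Fin n → ℝ} {C : ℝ}
    (hC : ∀ᵐ ξ : ℝ, ‖v ξ‖ ≤ C) {J : Set ℝ}
    (hcont : ∀ ξ ∈ J, AessL v ξ = {vbar ξ} ∧ AessR v ξ = {vbar ξ}) :
    ContinuousOn vbar J := by
  rw [Metric.continuousOn_iff]
  intro ξ hξ ε hε
  obtain ⟨δ, hδ, h⟩ := vbar_eps_delta hC hcont hξ hε
  refine ⟨δ, hδ, fun ζ hζ hd => ?_⟩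
  rw [dist_eq_norm]
  exact h ζ hζ (by rwa [Real.dist_eq] at hd)

/-- a.e. local control near a point of `J`. -/
lemma ae_near {v vbar : ℝ → Fin n → ℝ} {C : ℝ}
    (hC : ∀ᵐ ξ : ℝ, ‖v ξ‖ ≤ C) {J : Set ℝ} (hJopen : IsOpen J)
    (hcont : ∀ ξ ∈ J, AessL v ξ = {vbar ξ} ∧ AessR v ξ = {vbar ξ})
    {ξ : ℝ} (hξ : ξ ∈ J) {ε : ℝ} (hε : 0 < ε) :
    ∃ ρ > 0, Set.Ioo (ξ - ρ) (ξ + ρ) ⊆ J ∧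
      (∀ᵐ η : ℝ, η ∈ Set.Ioo (ξ - ρ) (ξ + ρ) → ‖v η - vbar ξ‖ < ε) ∧
      (∀ η ∈ Set.Ioo (ξ - ρ) (ξ + ρ), ‖vbar η - vbar ξ‖ < ε) := by
  obtain ⟨r₁, hr₁, hL⟩ := exists_left_nbhd hC (hcont ξ hξ).1
    (Metric.isOpen_ball (x := vbar ξ) (ε := ε)) (Metric.mem_ball_self hε)
  obtain ⟨r₂, hr₂, hR⟩ := exists_right_nbhd hC (hcont ξ hξ).2
    (Metric.isOpen_ball (x := vbar ξ) (ε := ε)) (Metric.mem_ball_self hε)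
  obtain ⟨δ, hδ, hcnt⟩ := vbar_eps_delta hC hcont hξ hε
  obtain ⟨ρJ, hρJ, hball⟩ := Metric.isOpen_iff.mp hJopen ξ hξ
  refine ⟨min (min r₁ r₂) (min δ ρJ), by positivity, ?_, ?_, ?_⟩
  · intro η hη
    apply hball
    rw [Metric.mem_ball, Real.dist_eq, abs_lt]
    obtain ⟨h1, h2⟩ := hη
    have : min (min r₁ r₂) (min δ ρJ) ≤ ρJ := le_trans (min_le_right _ _) (min_le_right _ _)
    constructor <;> linarith
  · have hael := ae_mem_of_essimOn_subset hC Metric.isOpen_ball hL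
    have haer := ae_mem_of_essimOn_subset hC Metric.isOpen_ball hR
    have hsing : ∀ᵐ η : ℝ, η ≠ ξ := by
      refine ae_iff.mpr ?_
      simpa using measure_singleton (α := ℝ) ξ
    filter_upwards [hael, haer, hsing] with η h1 h2 h3 hη
    obtain ⟨ha, hb⟩ := hη
    have hm : min (min r₁ r₂) (min δ ρJ) ≤ min r₁ r₂ := min_le_left _ _
    rcases lt_or_gt_of_ne h3 with hlt | hgt
    · have : v η ∈ Metric.ball (vbar ξ) ε := by
        apply h1
        constructor
        · have : min r₁ r₂ ≤ r₁ := min_le_left _ _; linarith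
        · exact hlt
      rwa [Metric.mem_ball, dist_eq_norm] at this
    · have : v η ∈ Metric.ball (vbar ξ) ε := by
        apply h2
        constructor
        · exact hgt
        · have : min r₁ r₂ ≤ r₂ := min_le_right _ _; linarith
      rwa [Metric.mem_ball, dist_eq_norm] at this
  · intro η hη
    obtain ⟨h1, h2⟩ := hη
    have hm : min (min r₁ r₂) (min δ ρJ) ≤ δ := le_trans (min_le_right _ _) (min_le_left _ _)
    have hηJ : η ∈ J := by
      apply hball
      rw [Metric.mem_ball, Real.dist_eq, abs_lt]
      have : min (min r₁ r₂) (min δ ρJ) ≤ ρJ := le_trans (min_le_right _ _) (min_le_right _ _)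
      constructor <;> linarith
    exact hcnt η hηJ (by rw [abs_lt]; constructor <;> linarith)

/-- `v` agrees a.e. with its continuous representative on `J`. -/
lemma v_ae_eq_vbar {v vbar : ℝ → Fin n → ℝ} {C : ℝ}
    (hC : ∀ᵐ ξ : ℝ, ‖v ξ‖ ≤ C) {J : Set ℝ} (hJopen : IsOpen J)
    (hcont : ∀ ξ ∈ J, AessL v ξ = {vbar ξ} ∧ AessR v ξ = {vbar ξ}) :
    ∀ᵐ η : ℝ, η ∈ J → v η = vbar η := by
  have key : ∀ k : ℕ, ∀ᵐ η : ℝ, η ∈ J → ‖v η - vbar η‖ < 2 / (k + 1) := by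
    intro k
    have hεk : (0:ℝ) < 1 / (k + 1) := by positivity
    choose! ρ hρ hsubJ hae hcnt using fun ξ (hξ : ξ ∈ J) => ae_near hC hJopen hcont hξ hεk
    obtain ⟨T, hTc, hTeq⟩ := TopologicalSpace.isOpen_iUnion_countable
      (fun i : J => Set.Ioo ((i : ℝ) - ρ i) ((i : ℝ) + ρ i)) (fun i => isOpen_Ioo)
    have haeT : ∀ᵐ η : ℝ, ∀ i ∈ T,
        η ∈ Set.Ioo ((i : ℝ) - ρ (i : ℝ)) ((i : ℝ) + ρ (i : ℝ)) → ‖v η - vbar (i : ℝ)‖ < 1 / (k+1) := by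
      rw [MeasureTheory.ae_ball_iff hTc]
      intro i _
      exact hae i i.2
    filter_upwards [haeT] with η hη hηJ
    have hcov : η ∈ ⋃ i : J, Set.Ioo ((i : ℝ) - ρ i) ((i : ℝ) + ρ i) :=
      mem_iUnion.mpr ⟨⟨η, hηJ⟩, by
        constructor <;> [skip; skip] <;>
        · have := hρ η hηJ; simp; linarith⟩
    rw [← hTeq] at hcov
    rw [mem_iUnion₂] at hcov
    obtain ⟨i, hiT, hi⟩ := hcov
    have h1 : ‖v η - vbar i‖ < 1 / (k+1) := hη i hiT hi
    have h2 : ‖vbar η - vbar i‖ < 1 / (k+1) := hcnt (i:ℝ) i.2 η hi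
    have h3 : ‖v η - vbar η‖ ≤ ‖v η - vbar (i:ℝ)‖ + ‖vbar η - vbar (i:ℝ)‖ := by
      have := norm_sub_le (v η - vbar (i:ℝ)) (vbar η - vbar (i:ℝ))
      simpa [sub_sub_sub_cancel_right] using this
    have : (1:ℝ) / (k+1) + 1 / (k+1) = 2 / (k+1) := by ring
    linarith
  rw [← MeasureTheory.ae_all_iff] at key
  filter_upwards [key] with η hη hηJ
  have : ∀ k : ℕ, ‖v η - vbar η‖ < 2 / (k + 1) := fun k => hη k hηJ
  by_contra hne
  have hpos : 0 < ‖v η - vbar η‖ := by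
    simpa [sub_eq_zero] using hne
  obtain ⟨k, hk⟩ := exists_nat_gt (2 / ‖v η - vbar η‖)
  have hk2 : 2 / ((k:ℝ) + 1) < ‖v η - vbar η‖ := by
    rw [div_lt_iff₀ (by positivity)]
    rw [div_lt_iff₀ hpos] at hk
    nlinarith [hpos]
  exact absurd (this k) (not_lt.mpr hk2.le)

abbrev Tfun : ℝ → ℝ := Real.smoothTransition
abbrev Tder : ℝ → ℝ := deriv Tfun

lemma Tfun_contDiff : ContDiff ℝ 2 Tfun := Real.smoothTransition.contDiff (n := 2)

lemma Tder_cont : Continuous Tder :=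
  Tfun_contDiff.continuous_deriv (by norm_num)

lemma Tfun_hasDerivAt (x : ℝ) : HasDerivAt Tfun (Tder x) x :=
  ((Tfun_contDiff.differentiable (by norm_num)) x).hasDerivAt

lemma Tder_zero_of_one_le {t : ℝ} (ht : 1 ≤ t) : Tder t = 0 := by
  have h1 : EqOn Tder (fun _ => (0:ℝ)) (Ioi 1) := by
    intro s hs
    have : Tfun =ᶠ[nhds s] (fun _ => (1:ℝ)) := by
      filter_upwards [isOpen_Ioi.mem_nhds hs] with y hy
      exact Real.smoothTransition.one_of_one_le (le_of_lt hy)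
    simp only [Tder]
    rw [this.deriv_eq]
    exact deriv_const _ _
  have h2 : EqOn Tder (fun _ => (0:ℝ)) (closure (Ioi 1)) :=
    h1.closure Tder_cont continuous_const
  rw [closure_Ioi] at h2
  exact h2 ht

lemma Tder_zero_of_nonpos {t : ℝ} (ht : t ≤ 0) : Tder t = 0 := by
  have h1 : EqOn Tder (fun _ => (0:ℝ)) (Iio 0) := by
    intro s hs
    have : Tfun =ᶠ[nhds s] (fun _ => (0:ℝ)) := by
      filter_upwards [isOpen_Iio.mem_nhds hs] with y hy
      exact Real.smoothTransition.zero_of_nonpos (le_of_lt hy)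
    simp only [Tder]
    rw [this.deriv_eq]
    exact deriv_const _ _
  have h2 : EqOn Tder (fun _ => (0:ℝ)) (closure (Iio 0)) :=
    h1.closure Tder_cont continuous_const
  rw [closure_Iio] at h2
  exact h2 ht

lemma Tder_integral_one : ∫ t in (0:ℝ)..1, Tder t = 1 := by
  rw [intervalIntegral.integral_eq_sub_of_hasDerivAt
    (fun x _ => Tfun_hasDerivAt x) (Tder_cont.intervalIntegrable 0 1)]
  simp [Tfun, Real.smoothTransition.one_of_one_le le_rfl,
    Real.smoothTransition.zero_of_nonpos le_rfl]

/-- Edge limit: `∫₀¹ T'(t) g(c + σ ε t) dt → g c` as `ε → 0⁺`. -/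
lemma edge_tendsto {g : ℝ → ℝ} {a b : ℝ} (hg : ContinuousOn g (Icc a b))
    {c σ d : ℝ} (hc : c ∈ Icc a b) (hd : 0 < d)
    (hmap : ∀ ε ∈ Ioo (0:ℝ) d, ∀ t ∈ Ioc (0:ℝ) 1, c + σ * (ε * t) ∈ Icc a b) :
    Tendsto (fun ε => ∫ t in (0:ℝ)..1, Tder t * g (c + σ * (ε * t)))
      (nhdsWithin 0 (Ioi 0)) (nhds (g c)) := by
  obtain ⟨CT, hCT⟩ := isCompact_Icc.exists_bound_of_continuousOn
    (Tder_cont.continuousOn (s := Icc (0:ℝ) 1))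
  obtain ⟨B, hB⟩ := isCompact_Icc.exists_bound_of_continuousOn hg
  have hIoo : Ioo (0:ℝ) d ∈ nhdsWithin (0:ℝ) (Ioi 0) :=
    Ioo_mem_nhdsGT_of_mem ⟨le_rfl, hd⟩
  have hgoal : ∫ t in (0:ℝ)..1, Tder t * g c = g c := by
    rw [intervalIntegral.integral_mul_const, Tder_integral_one, one_mul]
  rw [← hgoal]
  have hrw : ∀ h : ℝ → ℝ, ∫ t in (0:ℝ)..1, h t = ∫ t, h t ∂(volume.restrict (Ioc 0 1)) := by
    intro h; rw [intervalIntegral.integral_of_le zero_le_one]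
  simp only [hrw]
  refine tendsto_integral_filter_of_dominated_convergence (fun _ => CT * B) ?_ ?_ ?_ ?_
  · filter_upwards [hIoo] with ε hε
    refine ContinuousOn.aestronglyMeasurable ?_ measurableSet_Ioc
    refine (Tder_cont.continuousOn).mul (hg.comp ?_ ?_)
    · exact (continuous_const.add (continuous_const.mul
        (continuous_const.mul continuous_id))).continuousOn
    · intro t ht; exact hmap ε hε t ht
  · filter_upwards [hIoo] with ε hε
    filter_upwards [ae_restrict_mem measurableSet_Ioc] with t ht
    have h1 : |Tder t| ≤ CT := by
      have := hCT t ⟨ht.1.le, ht.2⟩; rwa [Real.norm_eq_abs] at this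
    have h2 : |g (c + σ * (ε * t))| ≤ B := by
      have := hB _ (hmap ε hε t ht); rwa [Real.norm_eq_abs] at this
    rw [Real.norm_eq_abs, abs_mul]
    exact mul_le_mul h1 h2 (abs_nonneg _) (le_trans (abs_nonneg _) h1)
  · exact integrableOn_const measure_Ioc_lt_top.ne
  · filter_upwards [ae_restrict_mem measurableSet_Ioc] with t ht
    refine Tendsto.const_mul _ ?_
    have hcw : ContinuousWithinAt g (Icc a b) c := hg c hc
    refine hcw.tendsto.comp ?_
    rw [tendsto_nhdsWithin_iff]
    constructor
    · have hcont : Continuous (fun ε : ℝ => c + σ * (ε * t)) :=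
        continuous_const.add (continuous_const.mul (continuous_id.mul continuous_const))
      have := hcont.tendsto 0
      simp only [mul_zero, zero_mul, add_zero] at this
      exact this.mono_left nhdsWithin_le_nhds
    · filter_upwards [hIoo] with ε hε
      exact hmap ε hε t ht

lemma key_identity {n : ℕ} {U : Set (Fin n → ℝ)} {f : (Fin n → ℝ) → (Fin n → ℝ)}
    (hfC : ContinuousOn f U)
    {v vbar : ℝ → Fin n → ℝ} (hsol : IsSSWeakSol f v)
    {a b : ℝ} (hab : a < b) {J : Set ℝ} (hIccJ : Icc a b ⊆ J)
    (hveq : ∀ᵐ η : ℝ, η ∈ J → v η = vbar η)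
    (hvbarc : ContinuousOn vbar J) (hmem : ∀ ξ ∈ J, vbar ξ ∈ U) (i : Fin n) :
    ((-a) • vbar a + f (vbar a)) i - ((-b) • vbar b + f (vbar b)) i
      = ∫ x in a..b, vbar x i := by
  set g : ℝ → ℝ := fun x => ((-x) • vbar x + f (vbar x)) i with hgdef
  have hvbarcI : ContinuousOn vbar (Icc a b) := hvbarc.mono hIccJ
  have hgI : ContinuousOn g (Icc a b) := by
    apply (continuous_apply i).comp_continuousOn
    exact ((continuousOn_id.neg.smul hvbarcI).add
      (hfC.comp hvbarcI (fun x hx => hmem x (hIccJ hx))))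
  have hviI : ContinuousOn (fun x => vbar x i) (Icc a b) :=
    (continuous_apply i).comp_continuousOn hvbarcI
  set d : ℝ := (b - a) / 3 with hddef
  have hd0 : 0 < d := by simp [hddef]; linarith
  -- the two families of integrals
  set phi : ℝ → ℝ → ℝ := fun ε x => Tfun ((x - a)/ε) * Tfun ((b - x)/ε) with hphidef
  set dphi : ℝ → ℝ → ℝ := fun ε x =>
    (Tder ((x - a)/ε) * (1/ε)) * Tfun ((b - x)/ε)
      + Tfun ((x - a)/ε) * (Tder ((b - x)/ε) * ((-1)/ε)) with hdphidef
  set L : ℝ → ℝ := fun ε => ∫ x in a..b, dphi ε x * g x with hLdef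
  set R : ℝ → ℝ := fun ε => ∫ x in a..b, phi ε x * vbar x i with hRdef
  have hIoods : Ioo (0:ℝ) d ∈ nhdsWithin (0:ℝ) (Ioi 0) :=
    Ioo_mem_nhdsGT_of_mem ⟨le_rfl, hd0⟩
  -- continuity of kernels for fixed ε
  have hphic : ∀ ε, Continuous (phi ε) := by
    intro ε
    have h1 : Continuous fun x : ℝ => (x - a)/ε := (continuous_id.sub continuous_const).div_const ε
    have h2 : Continuous fun x : ℝ => (b - x)/ε := (continuous_const.sub continuous_id).div_const ε
    exact (Real.smoothTransition.continuous.comp h1).mul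
      (Real.smoothTransition.continuous.comp h2)
  have hdphic : ∀ ε, Continuous (dphi ε) := by
    intro ε
    have h1 : Continuous fun x : ℝ => (x - a)/ε := (continuous_id.sub continuous_const).div_const ε
    have h2 : Continuous fun x : ℝ => (b - x)/ε := (continuous_const.sub continuous_id).div_const ε
    exact (((Tder_cont.comp h1).mul continuous_const).mul
      (Real.smoothTransition.continuous.comp h2)).add
      ((Real.smoothTransition.continuous.comp h1).mul
        ((Tder_cont.comp h2).mul continuous_const))
  -- Step Q : L ε = R ε for small ε
  have hQ : ∀ᶠ ε in nhdsWithin (0:ℝ) (Ioi 0), L ε = R ε := by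
    filter_upwards [hIoods] with ε hε
    obtain ⟨hε0, hεd⟩ := hε
    have hεne : ε ≠ 0 := ne_of_gt hε0
    -- derivative of phi ε
    have hd1 : ∀ x : ℝ, HasDerivAt (fun y => Tfun ((y - a)/ε)) (Tder ((x - a)/ε) * (1/ε)) x := by
      intro x
      have hin : HasDerivAt (fun y : ℝ => (y - a)/ε) (1/ε) x := by
        simpa using ((hasDerivAt_id x).sub_const a).div_const ε
      exact (Tfun_hasDerivAt _).comp x hin
    have hd2 : ∀ x : ℝ, HasDerivAt (fun y => Tfun ((b - y)/ε)) (Tder ((b - x)/ε) * ((-1)/ε)) x := by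
      intro x
      have hin : HasDerivAt (fun y : ℝ => (b - y)/ε) ((-1)/ε) x := by
        simpa using ((hasDerivAt_id x).const_sub b).div_const ε
      exact (Tfun_hasDerivAt _).comp x hin
    have hφd : ∀ x, HasDerivAt (phi ε) (dphi ε x) x := fun x => (hd1 x).mul (hd2 x)
    set ψ : ℝ → Fin n → ℝ := fun x => phi ε x • (Pi.single i (1:ℝ) : Fin n → ℝ) with hψdef
    have hψC : ContDiff ℝ 1 ψ := by
      have hTc1 : ContDiff ℝ 1 Tfun := Tfun_contDiff.of_le (by norm_num)
      have h1 : ContDiff ℝ 1 fun x : ℝ => (x - a)/ε :=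
        (contDiff_id.sub contDiff_const).div_const ε
      have h2 : ContDiff ℝ 1 fun x : ℝ => (b - x)/ε :=
        (contDiff_const.sub contDiff_id).div_const ε
      exact (((hTc1.comp h1).mul (hTc1.comp h2)).smul contDiff_const)
    have hψsupp : HasCompactSupport ψ := by
      apply HasCompactSupport.intro (isCompact_Icc (a := a) (b := b))
      intro x hx
      simp only [mem_Icc, not_and_or, not_le] at hx
      have hz : phi ε x = 0 := by
        rcases hx with hx | hx
        · have : (x - a)/ε ≤ 0 := div_nonpos_of_nonpos_of_nonneg (by linarith) hε0.le
          simp [hphidef, Real.smoothTransition.zero_of_nonpos this]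
        · have : (b - x)/ε ≤ 0 := div_nonpos_of_nonpos_of_nonneg (by linarith) hε0.le
          simp [hphidef, Real.smoothTransition.zero_of_nonpos this]
      simp [hψdef, hz]
    have hweak := hsol ψ hψC hψsupp
    have hderivψ : ∀ x, deriv ψ x = dphi ε x • (Pi.single i (1:ℝ) : Fin n → ℝ) := by
      intro x
      exact ((hφd x).smul_const ((Pi.single i (1:ℝ)) : Fin n → ℝ)).deriv
    have hdot : ∀ (c : ℝ) (w : Fin n → ℝ), (c • (Pi.single i (1:ℝ) : Fin n → ℝ)) ⬝ᵥ w = c * w i := by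
      intro c w
      rw [smul_dotProduct, single_dotProduct, smul_eq_mul]
      ring
    have hrw : (fun x => (deriv ψ x) ⬝ᵥ ((-x) • v x + f (v x)) - (ψ x) ⬝ᵥ (v x))
        = fun x => dphi ε x * ((-x) • v x + f (v x)) i - phi ε x * v x i := by
      funext x
      rw [hderivψ x, hdot, hdot]
    rw [hrw] at hweak
    -- replace by indicator of continuous representative
    set Find : ℝ → ℝ := (Icc a b).indicator (fun x => dphi ε x * g x - phi ε x * vbar x i)
      with hFinddef
    have hnea : ∀ᵐ η : ℝ, η ≠ a := by
      refine ae_iff.mpr ?_; simpa using measure_singleton (α := ℝ) a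
    have hneb : ∀ᵐ η : ℝ, η ≠ b := by
      refine ae_iff.mpr ?_; simpa using measure_singleton (α := ℝ) b
    have haeeq : (fun x => dphi ε x * ((-x) • v x + f (v x)) i - phi ε x * v x i)
        =ᵐ[volume] Find := by
      filter_upwards [hveq, hnea, hneb] with η hη hηa hηb
      by_cases hmemI : η ∈ Icc a b
      · have hηJ : η ∈ J := hIccJ hmemI
        rw [hFinddef, indicator_of_mem hmemI, hη hηJ]
      · rw [hFinddef, indicator_of_notMem hmemI]
        simp only [mem_Icc, not_and_or, not_le] at hmemI
        rcases hmemI with hx | hx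
        · have h0 : (η - a)/ε ≤ 0 := div_nonpos_of_nonpos_of_nonneg (by linarith) hε0.le
          simp [hphidef, hdphidef, Real.smoothTransition.zero_of_nonpos h0,
            Tder_zero_of_nonpos h0]
        · have h0 : (b - η)/ε ≤ 0 := div_nonpos_of_nonpos_of_nonneg (by linarith) hε0.le
          simp [hphidef, hdphidef, Real.smoothTransition.zero_of_nonpos h0,
            Tder_zero_of_nonpos h0]
    rw [integral_congr_ae haeeq] at hweak
    rw [hFinddef, MeasureTheory.integral_indicator measurableSet_Icc,
      MeasureTheory.integral_Icc_eq_integral_Ioc,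
      ← intervalIntegral.integral_of_le hab.le] at hweak
    have hint1 : IntervalIntegrable (fun x => dphi ε x * g x) volume a b := by
      apply ContinuousOn.intervalIntegrable
      rw [uIcc_of_le hab.le]
      exact ((hdphic ε).continuousOn).mul hgI
    have hint2 : IntervalIntegrable (fun x => phi ε x * vbar x i) volume a b := by
      apply ContinuousOn.intervalIntegrable
      rw [uIcc_of_le hab.le]
      exact ((hphic ε).continuousOn).mul hviI
    rw [intervalIntegral.integral_sub hint1 hint2] at hweak
    have := sub_eq_zero.mp hweak
    simpa [hLdef, hRdef] using this
  -- edge limits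
  have hE1 : Tendsto (fun ε => ∫ t in (0:ℝ)..1, Tder t * g (a + 1 * (ε * t)))
      (nhdsWithin 0 (Ioi 0)) (nhds (g a)) := by
    refine edge_tendsto hgI (left_mem_Icc.mpr hab.le) hd0 ?_
    intro ε hε t ht
    have h1 : ε * t ≤ ε := mul_le_of_le_one_right hε.1.le ht.2
    have h2 : 0 ≤ ε * t := mul_nonneg hε.1.le ht.1.le
    have h3 : ε < (b - a)/3 := hε.2
    constructor <;> [linarith; linarith]
  have hE2 : Tendsto (fun ε => ∫ t in (0:ℝ)..1, Tder t * g (b + (-1) * (ε * t)))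
      (nhdsWithin 0 (Ioi 0)) (nhds (g b)) := by
    refine edge_tendsto hgI (right_mem_Icc.mpr hab.le) hd0 ?_
    intro ε hε t ht
    have h1 : ε * t ≤ ε := mul_le_of_le_one_right hε.1.le ht.2
    have h2 : 0 ≤ ε * t := mul_nonneg hε.1.le ht.1.le
    have h3 : ε < (b - a)/3 := hε.2
    constructor <;> [linarith; linarith]
  -- identification of L with the edge integrals
  have hLeq : ∀ᶠ ε in nhdsWithin (0:ℝ) (Ioi 0),
      (∫ t in (0:ℝ)..1, Tder t * g (a + 1 * (ε * t)))
        - (∫ t in (0:ℝ)..1, Tder t * g (b + (-1) * (ε * t))) = L ε := by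
    filter_upwards [hIoods] with ε hε
    obtain ⟨hε0, hεd⟩ := hε
    have hεne : ε ≠ 0 := ne_of_gt hε0
    have hεd' : ε < (b - a)/3 := hεd
    set k1 : ℝ → ℝ := fun x => (Tder ((x - a)/ε) * (1/ε)) * Tfun ((b - x)/ε) with hk1def
    set k2 : ℝ → ℝ := fun x => Tfun ((x - a)/ε) * (Tder ((b - x)/ε) * ((-1)/ε)) with hk2def
    have h1c : Continuous fun x : ℝ => (x - a)/ε := (continuous_id.sub continuous_const).div_const ε
    have h2c : Continuous fun x : ℝ => (b - x)/ε := (continuous_const.sub continuous_id).div_const ε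
    have hk1c : Continuous k1 :=
      ((Tder_cont.comp h1c).mul continuous_const).mul (Real.smoothTransition.continuous.comp h2c)
    have hk2c : Continuous k2 :=
      (Real.smoothTransition.continuous.comp h1c).mul ((Tder_cont.comp h2c).mul continuous_const)
    have hiint : ∀ (h : ℝ → ℝ), Continuous h → ∀ c e : ℝ, a ≤ c → c ≤ e → e ≤ b →
        IntervalIntegrable (fun x => h x * g x) volume c e := by
      intro h hc c e hac hce heb
      apply ContinuousOn.intervalIntegrable
      rw [uIcc_of_le hce]
      exact (hc.continuousOn).mul (hgI.mono (Icc_subset_Icc hac heb))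
    have haε : a + ε ≤ b := by linarith
    have hbε : a ≤ b - ε := by linarith
    -- split L
    have hLsplit : L ε = (∫ x in a..b, k1 x * g x) + ∫ x in a..b, k2 x * g x := by
      have : EqOn (fun x => dphi ε x * g x) (fun x => k1 x * g x + k2 x * g x) (uIcc a b) := by
        intro x _
        simp only [hdphidef, hk1def, hk2def]
        ring
      rw [hLdef]
      simp only
      rw [intervalIntegral.integral_congr this,
        intervalIntegral.integral_add (hiint k1 hk1c a b le_rfl hab.le le_rfl)
          (hiint k2 hk2c a b le_rfl hab.le le_rfl)]
    -- first piece
    have hI1 : ∫ x in a..b, k1 x * g x = ∫ t in (0:ℝ)..1, Tder t * g (a + 1 * (ε * t)) := by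
      have hsp : ∫ x in a..b, k1 x * g x
          = (∫ x in a..(a+ε), k1 x * g x) + ∫ x in (a+ε)..b, k1 x * g x :=
        (intervalIntegral.integral_add_adjacent_intervals
          (hiint k1 hk1c a (a+ε) le_rfl (by linarith) haε)
          (hiint k1 hk1c (a+ε) b (by linarith) haε le_rfl)).symm
      have hz : ∫ x in (a+ε)..b, k1 x * g x = 0 := by
        have : EqOn (fun x => k1 x * g x) (fun _ => (0:ℝ)) (uIcc (a+ε) b) := by
          intro x hx
          rw [uIcc_of_le haε] at hx
          have : (1:ℝ) ≤ (x - a)/ε := by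
            rw [le_div_iff₀ hε0]
            have := hx.1; linarith
          simp [hk1def, Tder_zero_of_one_le this]
        rw [intervalIntegral.integral_congr this]
        simp
      have hcg : EqOn (fun x => k1 x * g x)
          (fun x => (Tder ((x - a)/ε) * (1/ε)) * g x) (uIcc a (a+ε)) := by
        intro x hx
        rw [uIcc_of_le (by linarith : a ≤ a + ε)] at hx
        have hT1 : Tfun ((b - x)/ε) = 1 := by
          apply Real.smoothTransition.one_of_one_le
          rw [le_div_iff₀ hε0]
          have := hx.2; linarith
        simp only [hk1def, hT1]
        ring
      -- substitution
      have hf : ∀ t ∈ uIcc (0:ℝ) 1, HasDerivAt (fun t : ℝ => a + ε * t) ε t := by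
        intro t _
        simpa using ((hasDerivAt_id t).const_mul ε).const_add a
      have himg : (fun t : ℝ => a + ε * t) '' (uIcc (0:ℝ) 1) ⊆ Icc a b := by
        rintro u ⟨t, ht, rfl⟩
        rw [uIcc_of_le zero_le_one] at ht
        have h1 : ε * t ≤ ε := mul_le_of_le_one_right hε0.le ht.2
        have h2 : 0 ≤ ε * t := mul_nonneg hε0.le ht.1
        refine ⟨?_, ?_⟩
        · show a ≤ a + ε * t; linarith
        · show a + ε * t ≤ b; linarith
      have hGc : ContinuousOn (fun u => (Tder ((u - a)/ε) * (1/ε)) * g u)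
          ((fun t : ℝ => a + ε * t) '' (uIcc (0:ℝ) 1)) :=
        ((((Tder_cont.comp h1c).mul continuous_const).continuousOn).mul hgI).mono himg
      have hsub := intervalIntegral.integral_comp_smul_deriv' hf continuousOn_const hGc
      have hlhs : EqOn (fun t => (fun _ : ℝ => ε) t •
            ((fun u => (Tder ((u - a)/ε) * (1/ε)) * g u) ∘ (fun t : ℝ => a + ε * t)) t)
          (fun t => Tder t * g (a + 1 * (ε * t))) (uIcc (0:ℝ) 1) := by
        intro t _
        simp only [Function.comp, smul_eq_mul, one_mul]
        have harg : (a + ε * t - a)/ε = t := by field_simp; ring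
        rw [harg]
        field_simp
      rw [intervalIntegral.integral_congr hlhs] at hsub
      rw [show a + ε * 0 = a by ring, show a + ε * 1 = a + ε by ring] at hsub
      rw [hsp, hz, add_zero, intervalIntegral.integral_congr hcg, ← hsub]
    -- second piece
    have hI2 : ∫ x in a..b, k2 x * g x
        = -∫ t in (0:ℝ)..1, Tder t * g (b + (-1) * (ε * t)) := by
      have hsp : ∫ x in a..b, k2 x * g x
          = (∫ x in a..(b-ε), k2 x * g x) + ∫ x in (b-ε)..b, k2 x * g x :=
        (intervalIntegral.integral_add_adjacent_intervals
          (hiint k2 hk2c a (b-ε) le_rfl hbε (by linarith))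
          (hiint k2 hk2c (b-ε) b hbε (by linarith) le_rfl)).symm
      have hz : ∫ x in a..(b-ε), k2 x * g x = 0 := by
        have : EqOn (fun x => k2 x * g x) (fun _ => (0:ℝ)) (uIcc a (b-ε)) := by
          intro x hx
          rw [uIcc_of_le hbε] at hx
          have : (1:ℝ) ≤ (b - x)/ε := by
            rw [le_div_iff₀ hε0]
            have := hx.2; linarith
          simp [hk2def, Tder_zero_of_one_le this]
        rw [intervalIntegral.integral_congr this]
        simp
      have hcg : EqOn (fun x => k2 x * g x)
          (fun x => (Tder ((b - x)/ε) * ((-1)/ε)) * g x) (uIcc (b-ε) b) := by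
        intro x hx
        rw [uIcc_of_le (by linarith : b - ε ≤ b)] at hx
        have hT1 : Tfun ((x - a)/ε) = 1 := by
          apply Real.smoothTransition.one_of_one_le
          rw [le_div_iff₀ hε0]
          have := hx.1; linarith
        simp only [hk2def, hT1]
        ring
      have hf : ∀ t ∈ uIcc (0:ℝ) 1, HasDerivAt (fun t : ℝ => b + (-ε) * t) (-ε) t := by
        intro t _
        simpa using ((hasDerivAt_id t).const_mul (-ε)).const_add b
      have himg : (fun t : ℝ => b + (-ε) * t) '' (uIcc (0:ℝ) 1) ⊆ Icc a b := by
        rintro u ⟨t, ht, rfl⟩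
        rw [uIcc_of_le zero_le_one] at ht
        have h1 : ε * t ≤ ε := mul_le_of_le_one_right hε0.le ht.2
        have h2 : 0 ≤ ε * t := mul_nonneg hε0.le ht.1
        refine ⟨?_, ?_⟩
        · show a ≤ b + -ε * t; linarith
        · show b + -ε * t ≤ b; linarith
      have hGc : ContinuousOn (fun u => (Tder ((b - u)/ε) * ((-1)/ε)) * g u)
          ((fun t : ℝ => b + (-ε) * t) '' (uIcc (0:ℝ) 1)) :=
        ((((Tder_cont.comp h2c).mul continuous_const).continuousOn).mul hgI).mono himg
      have hsub := intervalIntegral.integral_comp_smul_deriv' hf continuousOn_const hGc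
      have hlhs : EqOn (fun t => (fun _ : ℝ => -ε) t •
            ((fun u => (Tder ((b - u)/ε) * ((-1)/ε)) * g u) ∘ (fun t : ℝ => b + (-ε) * t)) t)
          (fun t => Tder t * g (b + (-1) * (ε * t))) (uIcc (0:ℝ) 1) := by
        intro t _
        simp only [Function.comp, smul_eq_mul]
        have harg : (b - (b + (-ε) * t))/ε = t := by field_simp; ring
        rw [harg]
        have harg2 : b + (-ε) * t = b + (-1) * (ε * t) := by ring
        rw [harg2]
        field_simp
      rw [intervalIntegral.integral_congr hlhs] at hsub
      have hend : ∫ u in (b + (-ε) * 0)..(b + (-ε) * 1),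
          (Tder ((b - u)/ε) * ((-1)/ε)) * g u = -∫ u in (b-ε)..b,
          (Tder ((b - u)/ε) * ((-1)/ε)) * g u := by
        have e0 : b + (-ε) * 0 = b := by ring
        have e1 : b + (-ε) * 1 = b - ε := by ring
        rw [e0, e1, intervalIntegral.integral_symm]
      rw [hend] at hsub
      rw [hsp, hz, zero_add, intervalIntegral.integral_congr hcg, hsub]
      ring
    rw [hLsplit, hI1, hI2]
    ring
  have hLtend : Tendsto L (nhdsWithin (0:ℝ) (Ioi 0)) (nhds (g a - g b)) :=
    Tendsto.congr' hLeq (hE1.sub hE2)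
  -- limit of R
  have hRtend : Tendsto R (nhdsWithin (0:ℝ) (Ioi 0)) (nhds (∫ x in a..b, vbar x i)) := by
    have hrw2 : ∀ h : ℝ → ℝ, (∫ x in a..b, h x) = ∫ x, h x ∂(volume.restrict (Ioc a b)) := by
      intro h; rw [intervalIntegral.integral_of_le hab.le]
    rw [hRdef]
    simp only [hrw2]
    refine tendsto_integral_filter_of_dominated_convergence (fun x => |vbar x i|) ?_ ?_ ?_ ?_
    · refine Filter.Eventually.of_forall (fun ε => ?_)
      exact (((hphic ε).continuousOn).mul
        (hviI.mono Ioc_subset_Icc_self)).aestronglyMeasurable measurableSet_Ioc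
    · refine Filter.Eventually.of_forall (fun ε => ?_)
      refine Filter.Eventually.of_forall (fun x => ?_)
      have h01 : 0 ≤ phi ε x ∧ phi ε x ≤ 1 := by
        constructor
        · exact mul_nonneg (Real.smoothTransition.nonneg _) (Real.smoothTransition.nonneg _)
        · exact mul_le_one₀ (Real.smoothTransition.le_one _)
            (Real.smoothTransition.nonneg _) (Real.smoothTransition.le_one _)
      rw [Real.norm_eq_abs, abs_mul]
      calc |phi ε x| * |vbar x i| ≤ 1 * |vbar x i| := by
            apply mul_le_mul_of_nonneg_right _ (abs_nonneg _)
            rw [abs_of_nonneg h01.1]; exact h01.2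
        _ = |vbar x i| := one_mul _
    · exact (ContinuousOn.integrableOn_compact isCompact_Icc hviI.abs).mono_set
        Ioc_subset_Icc_self
    · have hneb : ∀ᵐ x : ℝ ∂(volume.restrict (Ioc a b)), x ≠ b := by
        apply ae_restrict_of_ae
        refine ae_iff.mpr ?_; simpa using measure_singleton (α := ℝ) b
      filter_upwards [ae_restrict_mem measurableSet_Ioc, hneb] with x hx hxb
      have hxo : x ∈ Ioo a b := ⟨hx.1, lt_of_le_of_ne hx.2 hxb⟩
      have hm : 0 < min (x - a) (b - x) := lt_min (by linarith [hxo.1]) (by linarith [hxo.2])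
      have hev : ∀ᶠ ε in nhdsWithin (0:ℝ) (Ioi 0), phi ε x * vbar x i = vbar x i := by
        filter_upwards [Ioo_mem_nhdsGT_of_mem ⟨le_rfl, hm⟩] with ε hε
        have h1 : Tfun ((x - a)/ε) = 1 := by
          apply Real.smoothTransition.one_of_one_le
          rw [le_div_iff₀ hε.1]
          have := lt_of_lt_of_le hε.2 (min_le_left _ _); linarith
        have h2 : Tfun ((b - x)/ε) = 1 := by
          apply Real.smoothTransition.one_of_one_le
          rw [le_div_iff₀ hε.1]
          have := lt_of_lt_of_le hε.2 (min_le_right _ _); linarith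
        simp [hphidef, h1, h2]
      exact Tendsto.congr' (hev.mono fun ε h => h.symm) tendsto_const_nhds
  exact tendsto_nhds_unique (Tendsto.congr' hQ hLtend) hRtend


end Aux

/-- On an open interval of ess-im continuity points where the solution
is non-resonant (`det(−ξ I + A(v̄(ξ))) ≠ 0`), the continuous representative is constant. -/
theorem constant_on_nonresonant_interval
    {n : ℕ} (U : Set (Fin n → ℝ)) (hU : IsOpen U)
    (f : (Fin n → ℝ) → (Fin n → ℝ)) (hf : ContDiffOn ℝ 2 f U)
    (hconv : convexHull ℝ (USH f U) ⊆ U)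
    (v : ℝ → (Fin n → ℝ)) (hv : IsReducedState f U v)
    (hsol : IsSSWeakSol f v)
    (J : Set ℝ) (hJopen : IsOpen J) (hJord : J.OrdConnected)
    (vbar : ℝ → (Fin n → ℝ))
    (hcont : ∀ ξ ∈ J, AessL v ξ = {vbar ξ} ∧ AessR v ξ = {vbar ξ})
    (hnr : ∀ ξ ∈ J, detShift f ξ (vbar ξ) ≠ 0) :
    ∀ ξ ∈ J, ∀ ζ ∈ J, vbar ξ = vbar ζ := by
  classical
  obtain ⟨hvmeas, ⟨C, hC⟩, hess⟩ := hv
  have hmemU : ∀ ξ ∈ J, vbar ξ ∈ U := fun ξ hξ =>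
    (hess (vbar_mem_essim_univ hcont hξ)).1
  have hvbarc : ContinuousOn vbar J := vbar_continuousOn hC hcont
  have hveq : ∀ᵐ η : ℝ, η ∈ J → v η = vbar η := v_ae_eq_vbar hC hJopen hcont
  have hfC : ContinuousOn f U := hf.continuousOn
  have hfdiff : ∀ u ∈ U, HasFDerivAt f (fderiv ℝ f u) u := by
    intro u hu
    exact ((hf.contDiffAt (hU.mem_nhds hu)).differentiableAt (by norm_num)).hasFDerivAt
  have hfdc : ContinuousOn (fderiv ℝ f) U :=
    (hf.fderiv_of_isOpen (m := 1) hU (by norm_num)).continuousOn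
  -- local constancy
  have hloc : ∀ ξ₀ ∈ J, ∃ δ > 0, Icc (ξ₀ - δ) (ξ₀ + δ) ⊆ J ∧
      ∀ ζ ∈ Icc (ξ₀ - δ) (ξ₀ + δ), vbar ζ = vbar ξ₀ := by
    intro ξ₀ hξ₀
    set u0 : Fin n → ℝ := vbar ξ₀ with hu0def
    set A0 : (Fin n → ℝ) →L[ℝ] (Fin n → ℝ) := fderiv ℝ f u0 with hA0def
    set Lm : (Fin n → ℝ) →ₗ[ℝ] (Fin n → ℝ) :=
      -(ξ₀ • (LinearMap.id : (Fin n → ℝ) →ₗ[ℝ] (Fin n → ℝ))) + A0.toLinearMap with hLmdef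
    have hdet : LinearMap.det Lm ≠ 0 := hnr ξ₀ hξ₀
    set e : (Fin n → ℝ) ≃ₗ[ℝ] (Fin n → ℝ) := LinearMap.equivOfDetNeZero Lm hdet with hedef
    set eC : (Fin n → ℝ) ≃L[ℝ] (Fin n → ℝ) := e.toContinuousLinearEquiv with heCdef
    set K : ℝ := ‖(eC.symm : (Fin n → ℝ) →L[ℝ] (Fin n → ℝ))‖ with hKdef
    set Kp : ℝ := max K 1 with hKpdef
    have hKp1 : (1:ℝ) ≤ Kp := le_max_right _ _
    have hKp0 : (0:ℝ) < Kp := lt_of_lt_of_le one_pos hKp1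
    have hKb : ∀ w : Fin n → ℝ, ‖w‖ ≤ Kp * ‖Lm w‖ := by
      intro w
      have h1 : w = eC.symm (eC w) := (eC.symm_apply_apply w).symm
      have h2 : eC w = Lm w := by
        simp [heCdef, hedef, LinearMap.equivOfDetNeZero]
      calc ‖w‖ = ‖eC.symm (eC w)‖ := by rw [← h1]
        _ ≤ K * ‖eC w‖ := (eC.symm : (Fin n → ℝ) →L[ℝ] (Fin n → ℝ)).le_opNorm _
        _ = K * ‖Lm w‖ := by rw [h2]
        _ ≤ Kp * ‖Lm w‖ := by
            apply mul_le_mul_of_nonneg_right (le_max_left _ _) (norm_nonneg _)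
    set ε₁ : ℝ := 1 / (4 * Kp) with hε₁def
    have hε₁0 : 0 < ε₁ := by positivity
    -- ball where Df is close to A0
    obtain ⟨ρ₁, hρ₁0, hρ₁U⟩ := Metric.isOpen_iff.mp hU u0 (hmemU ξ₀ hξ₀)
    have hcw : ContinuousWithinAt (fderiv ℝ f) U u0 := hfdc u0 (hmemU ξ₀ hξ₀)
    obtain ⟨ρ₂, hρ₂0, hρ₂⟩ := Metric.continuousWithinAt_iff.mp hcw ε₁ hε₁0
    set ρ : ℝ := min ρ₁ ρ₂ / 2 with hρdef
    have hρ0 : 0 < ρ := by positivity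
    have hρU : Metric.closedBall u0 ρ ⊆ U := by
      intro x hx
      apply hρ₁U
      rw [Metric.mem_closedBall] at hx
      rw [Metric.mem_ball]
      have : min ρ₁ ρ₂ ≤ ρ₁ := min_le_left _ _
      calc dist x u0 ≤ ρ := hx
        _ < ρ₁ := by rw [hρdef]; linarith [lt_min hρ₁0 hρ₂0]
    have hρDf : ∀ x ∈ Metric.closedBall u0 ρ, ‖fderiv ℝ f x - A0‖ ≤ ε₁ := by
      intro x hx
      rw [Metric.mem_closedBall] at hx
      have hxU : x ∈ U := hρU (Metric.mem_closedBall.mpr hx)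
      have hd : dist x u0 < ρ₂ := by
        have h2 : min ρ₁ ρ₂ ≤ ρ₂ := min_le_right _ _
        calc dist x u0 ≤ ρ := hx
          _ < ρ₂ := by rw [hρdef]; linarith [lt_min hρ₁0 hρ₂0]
      have := hρ₂ hxU hd
      rw [dist_eq_norm] at this
      exact this.le
    -- choose δ
    obtain ⟨δc, hδc0, hδc⟩ := vbar_eps_delta hC hcont hξ₀ hρ0
    obtain ⟨rJ, hrJ0, hrJ⟩ := Metric.isOpen_iff.mp hJopen ξ₀ hξ₀
    set δ : ℝ := min (min (rJ/2) (δc/2)) (1/(8*Kp)) with hδdef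
    have hδ0 : 0 < δ := by positivity
    have hδrJ : δ < rJ := by
      have h1 : δ ≤ rJ/2 := le_trans (min_le_left _ _) (min_le_left _ _)
      linarith
    have hδδc : δ < δc := by
      have h1 : δ ≤ δc/2 := le_trans (min_le_left _ _) (min_le_right _ _)
      linarith
    have hδKp : δ ≤ 1/(8*Kp) := min_le_right _ _
    set I : Set ℝ := Icc (ξ₀ - δ) (ξ₀ + δ) with hIdef
    have hIJ : I ⊆ J := by
      intro x hx
      apply hrJ
      rw [Metric.mem_ball, Real.dist_eq, abs_lt]
      obtain ⟨h1, h2⟩ := hx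
      constructor <;> linarith
    have hIball : ∀ ζ ∈ I, vbar ζ ∈ Metric.closedBall u0 ρ := by
      intro ζ hζ
      rw [Metric.mem_closedBall, dist_eq_norm]
      refine (hδc ζ (hIJ hζ) ?_).le
      obtain ⟨h1, h2⟩ := hζ
      rw [abs_lt]; constructor <;> linarith
    refine ⟨δ, hδ0, hIJ, ?_⟩
    -- max of h on I
    set h : ℝ → ℝ := fun ζ => ‖vbar ζ - u0‖ with hhdef
    have hhc : ContinuousOn h I := ((hvbarc.mono hIJ).sub continuousOn_const).norm
    have hIne : I.Nonempty := ⟨ξ₀, by constructor <;> simp <;> linarith⟩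
    obtain ⟨ζm, hζmI, hζmax⟩ := isCompact_Icc.exists_isMaxOn hIne hhc
    set S : ℝ := h ζm with hSdef
    have hS0 : 0 ≤ S := norm_nonneg _
    have hSb : ∀ x ∈ I, h x ≤ S := fun x hx => hζmax hx
    -- key estimate
    have hkey : ∀ ζ ∈ I, h ζ ≤ S / 2 := by
      intro ζ hζI
      -- identity components
      have hEi : ∀ i : Fin n, f (vbar ζ) i - f u0 i
          = ζ * vbar ζ i - ξ₀ * u0 i - ∫ x in ξ₀..ζ, vbar x i := by
        intro i
        rcases lt_trichotomy ξ₀ ζ with hlt | heq | hgt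
        · have hsub : Icc ξ₀ ζ ⊆ J := by
            refine subset_trans (Icc_subset_Icc ?_ ?_) hIJ <;>
              [linarith; exact hζI.2]
          have := key_identity hfC hsol hlt hsub hveq hvbarc hmemU i
          simp only [Pi.add_apply, Pi.smul_apply, smul_eq_mul] at this
          linarith [this]
        · subst heq
          simp [hu0def]
        · have hsub : Icc ζ ξ₀ ⊆ J := by
            refine subset_trans (Icc_subset_Icc hζI.1 ?_) hIJ
            linarith
          have := key_identity hfC hsol hgt hsub hveq hvbarc hmemU i
          simp only [Pi.add_apply, Pi.smul_apply, smul_eq_mul] at this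
          rw [intervalIntegral.integral_symm]
          linarith [this]
      set Δ : Fin n → ℝ := vbar ζ - u0 with hΔdef
      set W : Fin n → ℝ := fun i => ∫ x in ξ₀..ζ, (vbar x i - u0 i) with hWdef
      set Rv : Fin n → ℝ := f (vbar ζ) - f u0 - A0 Δ with hRvdef
      have hMV : ‖Rv‖ ≤ ε₁ * ‖Δ‖ := by
        refine Convex.norm_image_sub_le_of_norm_hasFDerivWithin_le'
          (fun x hx => (hfdiff x (hρU hx)).hasFDerivWithinAt)
          (fun x hx => hρDf x hx) (convex_closedBall u0 ρ)
          (Metric.mem_closedBall_self hρ0.le) (hIball ζ hζI)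
      set Δ : Fin n → ℝ := vbar ζ - u0 with hΔdef
      set W : Fin n → ℝ := fun i => ∫ x in ξ₀..ζ, (vbar x i - u0 i) with hWdef
      set Rv : Fin n → ℝ := f (vbar ζ) - f u0 - A0 Δ with hRvdef
      have hξ₀I : ξ₀ ∈ I := by
        rw [hIdef]; constructor <;> linarith
      have huIccI : uIcc ξ₀ ζ ⊆ I := uIcc_subset_Icc hξ₀I hζI
      have habs : |ζ - ξ₀| ≤ δ := by
        rw [abs_le]; obtain ⟨h1, h2⟩ := hζI; constructor <;> linarith
      have hMV : ‖Rv‖ ≤ ε₁ * ‖Δ‖ := by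
        refine Convex.norm_image_sub_le_of_norm_hasFDerivWithin_le'
          (fun x hx => (hfdiff x (hρU hx)).hasFDerivWithinAt)
          (fun x hx => hρDf x hx) (convex_closedBall u0 ρ)
          (Metric.mem_closedBall_self hρ0.le) (hIball ζ hζI)
      have hLΔ : ∀ i, (Lm Δ) i = ((ζ - ξ₀) • Δ - W - Rv) i := by
        intro i
        have hint : IntervalIntegrable (fun x => vbar x i) volume ξ₀ ζ := by
          apply ContinuousOn.intervalIntegrable
          apply (continuous_apply i).comp_continuousOn
          exact hvbarc.mono (subset_trans huIccI hIJ)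
        have hWi : W i = (∫ x in ξ₀..ζ, vbar x i) - (ζ - ξ₀) * u0 i := by
          rw [hWdef]
          simp only
          rw [intervalIntegral.integral_sub hint (intervalIntegrable_const),
            intervalIntegral.integral_const, smul_eq_mul]
        have hL : (Lm Δ) i = -(ξ₀ * Δ i) + (A0 Δ) i := by
          simp [hLmdef, Pi.smul_apply, smul_eq_mul]
        have hR : ((ζ - ξ₀) • Δ - W - Rv) i
            = (ζ - ξ₀) * Δ i - W i - (f (vbar ζ) i - f u0 i - (A0 Δ) i) := by
          simp [hRvdef, Pi.smul_apply, smul_eq_mul]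
        have hΔi : Δ i = vbar ζ i - u0 i := by simp [hΔdef]
        rw [hL, hR, hWi, hΔi]
        linear_combination hEi i
      have hΔS : ‖Δ‖ ≤ S := hSb ζ hζI
      have hWb : ‖W‖ ≤ δ * S := by
        rw [pi_norm_le_iff_of_nonneg (by positivity)]
        intro i
        have hb : ∀ x ∈ Set.uIoc ξ₀ ζ, ‖vbar x i - u0 i‖ ≤ S := by
          intro x hx
          have hxI : x ∈ I := huIccI (Set.Ioc_subset_Icc_self hx)
          calc ‖vbar x i - u0 i‖ ≤ ‖vbar x - u0‖ := by
                simpa using norm_le_pi_norm (vbar x - u0) i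
            _ ≤ S := hSb x hxI
        have hit := intervalIntegral.norm_integral_le_of_norm_le_const hb
        calc ‖W i‖ ≤ S * |ζ - ξ₀| := hit
          _ ≤ S * δ := mul_le_mul_of_nonneg_left habs hS0
          _ = δ * S := mul_comm _ _
      have hLmb : ‖Lm Δ‖ ≤ (2*δ + ε₁) * S := by
        have heq : Lm Δ = (ζ - ξ₀) • Δ - W - Rv := funext hLΔ
        rw [heq]
        have h1 : ‖(ζ - ξ₀) • Δ‖ = |ζ - ξ₀| * ‖Δ‖ := by rw [norm_smul, Real.norm_eq_abs]
        have h2 : |ζ - ξ₀| * ‖Δ‖ ≤ δ * S :=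
          mul_le_mul habs hΔS (norm_nonneg _) hδ0.le
        have h3 : ε₁ * ‖Δ‖ ≤ ε₁ * S := mul_le_mul_of_nonneg_left hΔS hε₁0.le
        calc ‖(ζ - ξ₀) • Δ - W - Rv‖ ≤ ‖(ζ - ξ₀) • Δ - W‖ + ‖Rv‖ := norm_sub_le _ _
          _ ≤ ‖(ζ - ξ₀) • Δ‖ + ‖W‖ + ‖Rv‖ := by linarith [norm_sub_le ((ζ - ξ₀) • Δ) W]
          _ ≤ δ * S + (δ * S) + ε₁ * S := by rw [h1] at *; linarith [hWb, hMV]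
          _ = (2*δ + ε₁) * S := by ring
      have hhζ : h ζ = ‖Δ‖ := by rw [hhdef, hΔdef]
      have hstep : h ζ ≤ Kp * ((2*δ + ε₁) * S) := by
        rw [hhζ]
        exact le_trans (hKb Δ) (mul_le_mul_of_nonneg_left hLmb hKp0.le)
      have hKpδ : Kp * δ ≤ 1/8 := by
        have := mul_le_mul_of_nonneg_left hδKp hKp0.le
        calc Kp * δ ≤ Kp * (1/(8*Kp)) := this
          _ = 1/8 := by field_simp
      have hKpε : Kp * ε₁ = 1/4 := by
        rw [hε₁def]; field_simp
      nlinarith [hstep, hS0, hKp0]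
    -- conclude S = 0
    intro ζ hζ
    have hSS := hkey ζm hζmI
    have hS0' : S = 0 := by
      rw [hSdef] at *
      linarith
    have := hkey ζ hζ
    have hzero : h ζ ≤ 0 := by rw [hS0'] at this; linarith
    have : ‖vbar ζ - u0‖ = 0 := le_antisymm hzero (norm_nonneg _)
    have := norm_eq_zero.mp this
    rw [sub_eq_zero] at this
    exact this
  -- global constancy via connectedness
  intro ξ hξ ζ hζ
  by_contra hne
  set T1 : Set ℝ := {x | x ∈ J ∧ vbar x = vbar ξ} with hT1def
  set T2 : Set ℝ := {x | x ∈ J ∧ vbar x ≠ vbar ξ} with hT2def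
  have hT1o : IsOpen T1 := by
    rw [Metric.isOpen_iff]
    rintro x ⟨hxJ, hxv⟩
    obtain ⟨δ, hδ0, hIJ', hconst⟩ := hloc x hxJ
    refine ⟨δ, hδ0, fun y hy => ?_⟩
    rw [Metric.mem_ball, Real.dist_eq] at hy
    have hyI : y ∈ Icc (x - δ) (x + δ) := by
      rw [abs_lt] at hy
      constructor <;> linarith [hy.1, hy.2]
    exact ⟨hIJ' hyI, by rw [hconst y hyI, hxv]⟩
  have hT2o : IsOpen T2 := by
    rw [Metric.isOpen_iff]
    rintro x ⟨hxJ, hxv⟩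
    obtain ⟨δ, hδ0, hIJ', hconst⟩ := hloc x hxJ
    refine ⟨δ, hδ0, fun y hy => ?_⟩
    rw [Metric.mem_ball, Real.dist_eq] at hy
    have hyI : y ∈ Icc (x - δ) (x + δ) := by
      rw [abs_lt] at hy
      constructor <;> linarith [hy.1, hy.2]
    exact ⟨hIJ' hyI, by rw [hconst y hyI]; exact hxv⟩
  have hpre : IsPreconnected J := isPreconnected_iff_ordConnected.mpr hJord
  have hsub : J ⊆ T1 ∪ T2 := by
    intro x hx
    by_cases hc : vbar x = vbar ξ
    · exact Or.inl ⟨hx, hc⟩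
    · exact Or.inr ⟨hx, hc⟩
  have hne1 : (J ∩ T1).Nonempty := ⟨ξ, hξ, hξ, rfl⟩
  have hne2 : (J ∩ T2).Nonempty := ⟨ζ, hζ, hζ, fun hc => hne hc.symm⟩
  obtain ⟨x, _, hx1, hx2⟩ := hpre T1 T2 hT1o hT2o hsub hne1 hne2
  exact hx2.2 hx1.2

end
end

section
/- Let f : U → ℝ^n be C² on an open set U ⊆ ℝ^n, let A := Df, let u⋆ ∈ U, and suppose λ⋆ ∈ ℝ is a simple root of the characteristic polynomial λ ↦ det(−λ I + A(u⋆)). Then there exist an open neighborhood V ⊆ U of u⋆, a C¹ function λ : V → ℝ with λ(u⋆) = λ⋆, and a C¹ map r : V → ℝ^n \ {0} such that (−λ(u) I + A(u)) r(u) = 0 for all u ∈ V. -/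
open MeasureTheory Set Matrix

noncomputable section

section Aux
variable {n : ℕ}


/-- det as a continuous multilinear map in the rows. -/
def detCM (n : ℕ) : ContinuousMultilinearMap ℝ (fun _ : Fin n => (Fin n → ℝ)) ℝ :=
  MultilinearMap.mkContinuous (Matrix.detRowAlternating : AlternatingMap ℝ (Fin n → ℝ) ℝ (Fin n)).toMultilinearMap
    (Fintype.card (Equiv.Perm (Fin n))) (by
      intro v
      have h1 : (Matrix.detRowAlternating (R := ℝ) (n := Fin n)).toMultilinearMap v = Matrix.det (Matrix.of v) := rfl
      rw [h1, Matrix.det_apply]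
      refine le_trans (norm_sum_le _ _) ?_
      have hterm : ∀ σ ∈ (Finset.univ : Finset (Equiv.Perm (Fin n))),
          ‖Equiv.Perm.sign σ • ∏ i, Matrix.of v (σ i) i‖ ≤ ∏ i, ‖v i‖ := by
        intro σ _
        have h2 : ‖Equiv.Perm.sign σ • ∏ i, Matrix.of v (σ i) i‖ = ‖∏ i, v (σ i) i‖ := by
          rcases Int.units_eq_one_or (Equiv.Perm.sign σ) with h | h <;> simp [h]
        rw [h2]
        have h3 : ‖∏ i, v (σ i) i‖ ≤ ∏ i, ‖v (σ i)‖ := by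
          rw [Real.norm_eq_abs, Finset.abs_prod]
          exact Finset.prod_le_prod (fun i _ => abs_nonneg _) (fun i _ => norm_le_pi_norm (v (σ i)) i)
        calc ‖∏ i, v (σ i) i‖ ≤ ∏ i, ‖v (σ i)‖ := h3
          _ = ∏ i, ‖v i‖ := Fintype.prod_equiv σ _ _ fun i => rfl
      refine le_trans (Finset.sum_le_sum hterm) ?_
      simp [Finset.card_univ]
      )

lemma detCM_apply (v : Fin n → (Fin n → ℝ)) : detCM n v = Matrix.det (Matrix.of v) := by
  rw [detCM]; rw [show ((Matrix.detRowAlternating (R:=ℝ) (n:=Fin n)).toMultilinearMap.mkContinuous _ _) v = (Matrix.detRowAlternating (R:=ℝ) (n:=Fin n)).toMultilinearMap v from congrFun (MultilinearMap.coe_mkContinuous _ _ _) v]; rfl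

lemma contDiff_det : ContDiff ℝ 1 (fun M : Fin n → Fin n → ℝ => Matrix.det (Matrix.of M)) := by
  rw [show (fun M : Fin n → Fin n → ℝ => (Matrix.of M).det) = ⇑(detCM n) from
    (funext fun v => (detCM_apply v).symm)]
  exact (detCM n).contDiff


lemma hasDerivAt_det_sub_smul_one (M₀ : Matrix (Fin n) (Fin n) ℝ) :
    HasDerivAt (fun s : ℝ => Matrix.det (M₀ - s • 1)) (-(Matrix.trace (Matrix.adjugate M₀))) 0 := by
  classical
  have hc : HasDerivAt (fun s : ℝ => (fun a => M₀ a - s • (Pi.single a 1 : Fin n → ℝ)))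
      (fun a => -(Pi.single a 1 : Fin n → ℝ)) 0 := by
    rw [hasDerivAt_pi]
    intro a
    simpa using ((hasDerivAt_id (0:ℝ)).smul_const (Pi.single a 1 : Fin n → ℝ)).const_sub (M₀ a)
  have hd := ((detCM n).hasFDerivAt
      (fun a => M₀ a - (0:ℝ) • (Pi.single a 1 : Fin n → ℝ))).comp_hasDerivAt 0 hc
  simp only [Function.comp_def] at hd
  have hfun : (fun s : ℝ => detCM n (fun a => M₀ a - s • (Pi.single a 1 : Fin n → ℝ)))
      = fun s : ℝ => Matrix.det (M₀ - s • 1) := by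
    funext s
    rw [detCM_apply]
    congr 1
    ext a b
    simp [Matrix.one_apply, Pi.single_apply, eq_comm, mul_ite]
  have hval : (detCM n).linearDeriv (fun a => M₀ a - (0:ℝ) • (Pi.single a 1 : Fin n → ℝ))
      (fun a => -(Pi.single a 1 : Fin n → ℝ)) = -(Matrix.trace (Matrix.adjugate M₀)) := by
    rw [ContinuousMultilinearMap.linearDeriv_apply, Matrix.trace]
    rw [← Finset.sum_neg_distrib]
    refine Finset.sum_congr rfl fun a _ => ?_
    have h0 : (fun a => M₀ a - (0:ℝ) • (Pi.single a 1 : Fin n → ℝ)) = fun a => M₀ a := by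
      funext a; simp
    rw [h0]
    have h1 : detCM n (Function.update (fun a => M₀ a) a (-(Pi.single a 1 : Fin n → ℝ)))
        = Matrix.det (Matrix.updateRow M₀ a (-(Pi.single a 1 : Fin n → ℝ))) := by
      rw [detCM_apply]; rfl
    rw [h1]
    have h2 : (-(Pi.single a 1 : Fin n → ℝ)) = (-1 : ℝ) • (Pi.single a 1 : Fin n → ℝ) := by simp
    rw [h2, Matrix.det_updateRow_smul, ← Matrix.adjugate_apply]
    simp [Matrix.diag]
  rw [hfun, hval] at hd
  exact hd

lemma contDiff_adjugate_mulVec (w : Fin n → ℝ) :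
    ContDiff ℝ 1 (fun M : Fin n → Fin n → ℝ => (Matrix.adjugate (Matrix.of M)).mulVec w) := by
  classical
  rw [contDiff_pi]
  intro i
  have key : (fun M : Fin n → Fin n → ℝ => (Matrix.adjugate (Matrix.of M)).mulVec w i)
      = fun M => ∑ b, Matrix.det (Matrix.of (Function.update M b (Pi.single i 1))) * w b := by
    funext M
    simp only [Matrix.mulVec, dotProduct]
    refine Finset.sum_congr rfl fun b _ => ?_
    show Matrix.adjugate (Matrix.of M) i b * w b = _
    rw [Matrix.adjugate_apply]
    rfl
  rw [key]
  refine ContDiff.sum fun b _ => ?_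
  refine ContDiff.mul ?_ contDiff_const
  refine contDiff_det.comp ?_
  rw [contDiff_pi]
  intro a
  by_cases h : a = b
  · subst h
    simp only [Function.update_self]
    exact contDiff_const
  · simp only [Function.update_of_ne h]
    exact contDiff_apply _ _ a

end Aux

/-- Near a state `u⋆` at which `λ⋆` is a simple root of the
characteristic polynomial `λ ↦ det(−λ I + Df(u⋆))`, there exist a `C¹` characteristic
speed map `λ` and a `C¹` nonvanishing eigenvector field `r` with
`(−λ(u) I + Df(u)) r(u) = 0`. -/
theorem local_characteristic_speed_map_and_eigenvector_field
    {n : ℕ} (U : Set (Fin n → ℝ)) (hU : IsOpen U)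
    (f : (Fin n → ℝ) → (Fin n → ℝ)) (hf : ContDiffOn ℝ 2 f U)
    (us : Fin n → ℝ) (hus : us ∈ U) (lams : ℝ)
    (hroot : detShift f lams us = 0)
    (hsimple : deriv (fun t : ℝ => detShift f t us) lams ≠ 0) :
    ∃ V : Set (Fin n → ℝ), IsOpen V ∧ us ∈ V ∧ V ⊆ U ∧
      ∃ (lam : (Fin n → ℝ) → ℝ) (r : (Fin n → ℝ) → (Fin n → ℝ)),
        ContDiffOn ℝ 1 lam V ∧ ContDiffOn ℝ 1 r V ∧ lam us = lams ∧
        ∀ u ∈ V, r u ≠ 0 ∧ (-(lam u)) • r u + fderiv ℝ f u (r u) = 0 := by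
  classical
  -- the derivative field is C¹ on U
  have hA : ContDiffOn ℝ 1 (fun u : (Fin n → ℝ) => fderiv ℝ f u) U :=
    ContDiffOn.fderiv_of_isOpen (m := 1) hf hU (by norm_num)
  -- basis test vectors
  set eb : Fin n → (Fin n → ℝ) := fun j => fun j' => if j' = j then (1:ℝ) else 0 with hebdef
  -- the shifted matrix
  set Mat : (Fin n → ℝ) → ℝ → Matrix (Fin n) (Fin n) ℝ := fun u t =>
    LinearMap.toMatrix' (-(t • (LinearMap.id : (Fin n → ℝ) →ₗ[ℝ] (Fin n → ℝ))) + (fderiv ℝ f u).toLinearMap)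
    with hMatdef
  have hMatEntry : ∀ (u : (Fin n → ℝ)) (t : ℝ) (i j : Fin n),
      Mat u t i j = fderiv ℝ f u (eb j) i - t * (if i = j then 1 else 0) := by
    intro u t i j
    show LinearMap.toMatrix' (-(t • (LinearMap.id : (Fin n → ℝ) →ₗ[ℝ] (Fin n → ℝ)))
      + (fderiv ℝ f u).toLinearMap) i j = _
    rw [LinearMap.toMatrix'_apply]
    simp only [LinearMap.add_apply, LinearMap.neg_apply, LinearMap.smul_apply,
      LinearMap.id_apply, Pi.add_apply, Pi.neg_apply, Pi.smul_apply, smul_eq_mul,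
      ContinuousLinearMap.coe_coe]
    rw [hebdef]
    by_cases h : i = j
    · subst h; simp; linarith [congrArg (fun v => fderiv ℝ f u v i) (funext fun k => Pi.single_apply i (1:ℝ) k)]
    · have h' : ¬ (i = j) := h
      simp [h, h']; exact congrArg (fun v => fderiv ℝ f u v i) (funext fun k => Pi.single_apply j (1:ℝ) k)
  have hdetMat : ∀ (u : (Fin n → ℝ)) (t : ℝ), detShift f t u = Matrix.det (Mat u t) := by
    intro u t
    rw [hMatdef, LinearMap.det_toMatrix']
    rfl
  -- the function F
  set F : (Fin n → ℝ) × ℝ → ℝ := fun p => detShift f p.2 p.1 with hFdef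
  have hFof : ∀ p : (Fin n → ℝ) × ℝ, F p = Matrix.det (Matrix.of (fun i j =>
      fderiv ℝ f p.1 (eb j) i - p.2 * (if i = j then 1 else 0))) := by
    intro p
    show detShift f p.2 p.1 = _
    rw [hdetMat]
    congr 1
    ext i j
    rw [Matrix.of_apply, hMatEntry]
  -- smoothness of F
  have hFsm : ContDiffOn ℝ 1 F (U ×ˢ (univ : Set ℝ)) := by
    rw [show F = fun p : (Fin n → ℝ) × ℝ => Matrix.det (Matrix.of (fun i j =>
        fderiv ℝ f p.1 (eb j) i - p.2 * (if i = j then 1 else 0))) from funext hFof]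
    refine contDiff_det.comp_contDiffOn ?_
    rw [contDiffOn_pi]
    intro i
    rw [contDiffOn_pi]
    intro j
    have hfst : ContDiffOn ℝ 1 (fun p : (Fin n → ℝ) × ℝ => fderiv ℝ f p.1) (U ×ˢ (univ : Set ℝ)) := by
      refine hA.comp contDiff_fst.contDiffOn ?_
      intro p hp
      exact hp.1
    have h1 : ContDiffOn ℝ 1 (fun p : (Fin n → ℝ) × ℝ => fderiv ℝ f p.1 (eb j) i)
        (U ×ˢ (univ : Set ℝ)) := by
      have h2 := hfst.clm_apply contDiffOn_const (g := fun _ : (Fin n → ℝ) × ℝ => eb j)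
      exact ((ContinuousLinearMap.proj (R := ℝ) (φ := fun _ : Fin n => ℝ)
        i).contDiff.comp_contDiffOn h2)
    exact h1.sub (((contDiff_snd.mul contDiff_const)).contDiffOn)
  -- the map G
  set G : (Fin n → ℝ) × ℝ → (Fin n → ℝ) × ℝ := fun p => (p.1, F p) with hGdef
  have hopen : IsOpen (U ×ˢ (univ : Set ℝ)) := hU.prod isOpen_univ
  have hmem : (us, lams) ∈ U ×ˢ (univ : Set ℝ) := ⟨hus, trivial⟩
  have hGat : ContDiffAt ℝ 1 G (us, lams) :=
    (contDiff_fst.contDiffOn.prodMk hFsm).contDiffAt (hopen.mem_nhds hmem)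
  have hFat : ContDiffAt ℝ 1 F (us, lams) := hFsm.contDiffAt (hopen.mem_nhds hmem)
  set L : ((Fin n → ℝ) × ℝ) →L[ℝ] ℝ := fderiv ℝ F (us, lams) with hLdef
  have hL : HasFDerivAt F L (us, lams) := (hFat.differentiableAt one_ne_zero).hasFDerivAt
  -- the partial derivative in t
  have hcurve : HasDerivAt (fun t : ℝ => F (us, t)) (L ((0 : (Fin n → ℝ)), (1:ℝ))) lams := by
    have h1 : HasDerivAt (fun t : ℝ => ((us, t) : (Fin n → ℝ) × ℝ)) ((0 : (Fin n → ℝ)), (1:ℝ)) lams :=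
      (hasDerivAt_const lams us).prodMk (hasDerivAt_id lams)
    exact hL.comp_hasDerivAt lams h1
  have hc : L ((0 : (Fin n → ℝ)), (1:ℝ)) ≠ 0 := by
    have h2 : deriv (fun t : ℝ => detShift f t us) lams = L ((0 : (Fin n → ℝ)), (1:ℝ)) := by
      rw [← hcurve.deriv]
    exact fun h => hsimple (h2.trans h)
  set c : ℝ := L ((0 : (Fin n → ℝ)), (1:ℝ)) with hcdef
  have key : ∀ (h : (Fin n → ℝ)) (s : ℝ), L (h, s) = L (h, 0) + s * c := by
    intro h s
    have hps : ((h, s) : (Fin n → ℝ) × ℝ) = (h, 0) + s • (((0 : (Fin n → ℝ)), (1:ℝ)) : (Fin n → ℝ) × ℝ) := by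
      ext <;> simp
    rw [hps, map_add, _root_.map_smul, smul_eq_mul, hcdef]
  -- the equivalence
  set fwd : ((Fin n → ℝ) × ℝ) →L[ℝ] ((Fin n → ℝ) × ℝ) := (ContinuousLinearMap.fst ℝ (Fin n → ℝ) ℝ).prod L with hfwddef
  set g : ((Fin n → ℝ) × ℝ) →L[ℝ] ℝ := c⁻¹ • ((ContinuousLinearMap.snd ℝ (Fin n → ℝ) ℝ)
    - L.comp ((ContinuousLinearMap.fst ℝ (Fin n → ℝ) ℝ).prod 0)) with hgdef
  have hgapp : ∀ (h : (Fin n → ℝ)) (y : ℝ), g (h, y) = c⁻¹ * (y - L (h, 0)) := by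
    intro h y
    rw [hgdef]
    simp [ContinuousLinearMap.smul_apply, ContinuousLinearMap.sub_apply,
      ContinuousLinearMap.comp_apply, ContinuousLinearMap.prod_apply]
  have hfwdapp : ∀ p : (Fin n → ℝ) × ℝ, fwd p = (p.1, L p) := by
    intro p; rw [hfwddef]; rfl
  set bwd : ((Fin n → ℝ) × ℝ) →L[ℝ] ((Fin n → ℝ) × ℝ) := (ContinuousLinearMap.fst ℝ (Fin n → ℝ) ℝ).prod g with hbwddef
  have hbwdapp : ∀ p : (Fin n → ℝ) × ℝ, bwd p = (p.1, g p) := by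
    intro p; rw [hbwddef]; rfl
  have h1 : ∀ p : (Fin n → ℝ) × ℝ, bwd (fwd p) = p := by
    rintro ⟨h, s⟩
    rw [hfwdapp, hbwdapp]
    ext
    · rfl
    · show g (h, L (h, s)) = s
      rw [hgapp, key h s]
      field_simp
      ring
  have h2 : ∀ p : (Fin n → ℝ) × ℝ, fwd (bwd p) = p := by
    rintro ⟨h, y⟩
    rw [hbwdapp, hfwdapp]
    ext
    · rfl
    · show L (h, g (h, y)) = y
      rw [hgapp, key h (c⁻¹ * (y - L (h, 0)))]
      field_simp
      ring
  set Φ : ((Fin n → ℝ) × ℝ) ≃L[ℝ] ((Fin n → ℝ) × ℝ) := ContinuousLinearEquiv.equivOfInverse fwd bwd h1 h2 with hΦdef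
  have hG' : HasFDerivAt G (Φ : ((Fin n → ℝ) × ℝ) →L[ℝ] ((Fin n → ℝ) × ℝ)) (us, lams) := by
    have hfwd : HasFDerivAt G fwd (us, lams) := by
      rw [hfwddef]
      exact (hasFDerivAt_fst).prodMk hL
    exact hfwd
  -- inverse function theorem
  have hS : HasStrictFDerivAt G (Φ : ((Fin n → ℝ) × ℝ) →L[ℝ] ((Fin n → ℝ) × ℝ)) (us, lams) :=
    hGat.hasStrictFDerivAt' hG' one_ne_zero
  set H : (Fin n → ℝ) × ℝ → (Fin n → ℝ) × ℝ := hS.localInverse G Φ (us, lams) with hHdef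
  have hG0 : G (us, lams) = ((us, (0:ℝ)) : (Fin n → ℝ) × ℝ) := by
    rw [hGdef]
    ext
    · rfl
    · show F (us, lams) = 0
      exact hroot
  have hHat : ContDiffAt ℝ 1 H (us, 0) := by
    rw [← hG0]
    exact hGat.to_localInverse hG' one_ne_zero
  have hright : ∀ᶠ y in nhds ((us, (0:ℝ)) : (Fin n → ℝ) × ℝ), G (H y) = y := by
    rw [← hG0]
    exact hS.eventually_right_inverse
  have hH0 : H (us, 0) = ((us, lams) : (Fin n → ℝ) × ℝ) := by
    rw [← hG0]
    exact hS.localInverse_apply_image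
  set lam : (Fin n → ℝ) → ℝ := fun u => (H (u, 0)).2 with hlamdef
  have hlamus : lam us = lams := by rw [hlamdef]; simp only; rw [hH0]
  have hlamAt : ContDiffAt ℝ 1 lam us := by
    have hin : ContDiffAt ℝ 1 (fun u : (Fin n → ℝ) => ((u, (0:ℝ)) : (Fin n → ℝ) × ℝ)) us :=
      (contDiff_id.prodMk contDiff_const).contDiffAt
    have hcomp : ContDiffAt ℝ 1 (fun u : (Fin n → ℝ) => H (u, 0)) us := hHat.comp us hin
    exact contDiff_snd.contDiffAt.comp us hcomp
  obtain ⟨W, hWnhds, hlamW⟩ := hlamAt.contDiffOn le_rfl (by simp)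
  -- the open set where G (H (u,0)) = (u,0)
  set T : Set (Fin n → ℝ) := {u : (Fin n → ℝ) | G (H (u, 0)) = (u, 0)} with hTdef
  have hT : T ∈ nhds us := by
    have hcont : ContinuousAt (fun u : (Fin n → ℝ) => ((u, (0:ℝ)) : (Fin n → ℝ) × ℝ)) us :=
      (continuous_id.prodMk continuous_const).continuousAt
    exact hcont hright
  have hTprop : ∀ u ∈ T, (H (u, 0)) = ((u, lam u) : (Fin n → ℝ) × ℝ) ∧ F (u, lam u) = 0 := by
    intro u hu
    have h3 : G (H (u, 0)) = ((u, (0:ℝ)) : (Fin n → ℝ) × ℝ) := hu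
    have h4 : (H (u, 0)).1 = u := congrArg Prod.fst h3
    have h5 : F (H (u, 0)) = 0 := congrArg Prod.snd h3
    have h6 : H (u, 0) = ((u, lam u) : (Fin n → ℝ) × ℝ) := by
      rw [hlamdef]
      exact Prod.ext h4 rfl
    exact ⟨h6, by rw [← h6]; exact h5⟩
  -- adjugate nonzero
  set M₀ : Matrix (Fin n) (Fin n) ℝ := Mat us lams with hM₀def
  have hadj : Matrix.adjugate M₀ ≠ 0 := by
    intro h0
    apply hsimple
    have hshift : (fun t : ℝ => detShift f t us) = fun t => Matrix.det (M₀ - (t - lams) • 1) := by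
      funext t
      rw [hdetMat]
      congr 1
      ext i j
      rw [hMatEntry, Matrix.sub_apply, Matrix.smul_apply, Matrix.one_apply, hM₀def, hMatEntry]
      by_cases h : i = j <;> simp [h]
    have hder := hasDerivAt_det_sub_smul_one M₀
    have hder0 : HasDerivAt (fun s : ℝ => Matrix.det (M₀ - s • 1)) 0 (lams - lams) := by
      rw [sub_self]
      simpa [h0] using hder
    have hi : HasDerivAt (fun t : ℝ => t - lams) 1 lams := (hasDerivAt_id lams).sub_const lams
    have hcomp := HasDerivAt.comp (h₂ := fun s : ℝ => Matrix.det (M₀ - s • 1)) (h := fun t : ℝ => t - lams) lams hder0 hi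
    rw [hshift]
    simpa [Function.comp_def] using hcomp.deriv
  -- a nonzero column of the adjugate
  obtain ⟨i0, hi0⟩ := Function.ne_iff.1 hadj
  obtain ⟨j0, hj0⟩ := Function.ne_iff.1 hi0
  set w : (Fin n → ℝ) := Pi.single j0 (1:ℝ) with hwdef
  set Bfun : (Fin n → ℝ) → Fin n → Fin n → ℝ := fun u a b =>
    fderiv ℝ f u (eb b) a - lam u * (if a = b then 1 else 0) with hBdef
  have hBof : ∀ u : (Fin n → ℝ), Matrix.of (Bfun u) = Mat u (lam u) := by
    intro u
    ext a b
    rw [Matrix.of_apply, hBdef, hMatEntry]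
  set r : (Fin n → ℝ) → (Fin n → ℝ) := fun u => (Matrix.adjugate (Matrix.of (Bfun u))).mulVec w with hrdef
  -- smoothness of r on W ∩ U
  have hBsm : ContDiffOn ℝ 1 Bfun (W ∩ U) := by
    rw [contDiffOn_pi]
    intro a
    rw [contDiffOn_pi]
    intro b
    have hA' : ContDiffOn ℝ 1 (fun u : (Fin n → ℝ) => fderiv ℝ f u (eb b) a) (W ∩ U) := by
      have h2 := (hA.mono (inter_subset_right : W ∩ U ⊆ U)).clm_apply contDiffOn_const
        (g := fun _ : (Fin n → ℝ) => eb b)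
      exact ((ContinuousLinearMap.proj (R := ℝ) (φ := fun _ : Fin n => ℝ)
        a).contDiff.comp_contDiffOn h2)
    exact hA'.sub ((hlamW.mono (inter_subset_left : W ∩ U ⊆ W)).mul contDiffOn_const)
  have hrsm : ContDiffOn ℝ 1 r (W ∩ U) := (contDiff_adjugate_mulVec w).comp_contDiffOn hBsm
  -- r us ≠ 0
  have hrus : r us ≠ 0 := by
    intro h0
    apply hj0
    have h3 : Matrix.of (Bfun us) = M₀ := by rw [hBof, hlamus, hM₀def]
    have h4 := congrFun h0 i0
    rw [hrdef] at h4
    simp only at h4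
    rw [h3, hwdef] at h4
    simpa [Matrix.mulVec, dotProduct, Pi.single_apply, mul_ite] using h4
  -- final neighborhood
  set V₀ : Set (Fin n → ℝ) := interior W ∩ U ∩ interior T with hV₀def
  have hV₀open : IsOpen V₀ := (isOpen_interior.inter hU).inter isOpen_interior
  have husV₀ : us ∈ V₀ :=
    ⟨⟨mem_interior_iff_mem_nhds.2 hWnhds, hus⟩, mem_interior_iff_mem_nhds.2 hT⟩
  have hrcont : ContinuousOn r V₀ := by
    refine (hrsm.continuousOn).mono ?_
    intro u hu
    exact ⟨interior_subset hu.1.1, hu.1.2⟩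
  set V : Set (Fin n → ℝ) := V₀ ∩ r ⁻¹' ({0}ᶜ) with hVdef
  have hVopen : IsOpen V := hrcont.isOpen_inter_preimage hV₀open isOpen_compl_singleton
  refine ⟨V, hVopen, ⟨husV₀, hrus⟩, fun u hu => hu.1.1.2, lam, r, ?_, ?_, hlamus, ?_⟩
  · refine hlamW.mono ?_
    intro u hu
    exact interior_subset hu.1.1.1
  · refine hrsm.mono ?_
    intro u hu
    exact ⟨interior_subset hu.1.1.1, hu.1.1.2⟩
  · intro u hu
    refine ⟨hu.2, ?_⟩
    have huT : u ∈ T := interior_subset hu.1.2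
    have hdet0 : Matrix.det (Mat u (lam u)) = 0 := by
      rw [← hdetMat]
      exact (hTprop u huT).2
    have hker : (Mat u (lam u)).mulVec (r u) = 0 := by
      rw [hrdef]
      simp only
      rw [hBof, Matrix.mulVec_mulVec, Matrix.mul_adjugate, hdet0, zero_smul,
        Matrix.zero_mulVec]
    have htoLin : (Mat u (lam u)).mulVec (r u)
        = (-(lam u • (LinearMap.id : (Fin n → ℝ) →ₗ[ℝ] (Fin n → ℝ))) + (fderiv ℝ f u).toLinearMap) (r u) := by
      rw [hMatdef]
      rw [← Matrix.toLin'_apply, Matrix.toLin'_toMatrix']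
    rw [htoLin] at hker
    simp only [LinearMap.add_apply, LinearMap.neg_apply, LinearMap.smul_apply,
      LinearMap.id_apply, ContinuousLinearMap.coe_coe] at hker
    rw [← neg_smul] at hker
    exact hker


end
end

section
/- Let U ⊆ ℝ^n be open, f : U → ℝ^n be C², A := Df, and let V ⊆ U be open with C¹ functions λ : V → ℝ and r : V → ℝ^n \ {0} satisfying (−λ(u) I + A(u)) r(u) = 0 for all u ∈ V. Let v : J → V be a rarefaction wave: v = Û ∘ w where Û : I → V is a C¹ solution of dÛ/dη = r(Û(η)) on a nonempty open interval I, w : J → I is a homeomorphism from a nonempty open interval J, and λ(v(ξ)) = ξ for all ξ ∈ J. Then for any fixed ξ₀ ∈ J, the Dafermos function D(ξ) := −ξ v(ξ) + f(v(ξ)) + ∫_{ξ₀}^{ξ} v(ξ') dξ' is constant on J. -/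
open MeasureTheory Set Matrix

noncomputable section

/-- Along a rarefaction wave `v = Û ∘ w` (with `λ(v(ξ)) = ξ` on `J`),
the Dafermos function `D(ξ) = −ξ v(ξ) + f(v(ξ)) + ∫_{ξ₀}^{ξ} v` is constant on `J`. -/
theorem dafermos_constant_on_rarefaction_wave
    {n : ℕ} (U : Set (Fin n → ℝ)) (hU : IsOpen U)
    (f : (Fin n → ℝ) → (Fin n → ℝ)) (hf : ContDiffOn ℝ 2 f U)
    (V : Set (Fin n → ℝ)) (hVopen : IsOpen V) (hVU : V ⊆ U)
    (lam : (Fin n → ℝ) → ℝ) (r : (Fin n → ℝ) → (Fin n → ℝ))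
    (hlam : ContDiffOn ℝ 1 lam V) (hr : ContDiffOn ℝ 1 r V)
    (heig : ∀ u ∈ V, r u ≠ 0 ∧ (-(lam u)) • r u + fderiv ℝ f u (r u) = 0)
    (I : Set ℝ) (hIopen : IsOpen I) (hIord : I.OrdConnected) (hIne : I.Nonempty)
    (Uc : ℝ → (Fin n → ℝ)) (hmaps : ∀ η ∈ I, Uc η ∈ V)
    (hode : ∀ η ∈ I, HasDerivAt Uc (r (Uc η)) η)
    (J : Set ℝ) (hJopen : IsOpen J) (hJord : J.OrdConnected) (hJne : J.Nonempty)
    (w : ℝ → ℝ) (hw : ContinuousOn w J) (hwmaps : Set.MapsTo w J I)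
    (hwinv : ∃ w' : ℝ → ℝ, ContinuousOn w' I ∧ Set.MapsTo w' I J ∧
      (∀ ξ ∈ J, w' (w ξ) = ξ) ∧ (∀ η ∈ I, w (w' η) = η))
    (hres : ∀ ξ ∈ J, lam (Uc (w ξ)) = ξ)
    (ξ₀ : ℝ) (hξ₀ : ξ₀ ∈ J) :
    ∀ ξ ∈ J, ∀ ζ ∈ J,
      (-ξ) • Uc (w ξ) + f (Uc (w ξ)) + (∫ t in ξ₀..ξ, Uc (w t)) =
        (-ζ) • Uc (w ζ) + f (Uc (w ζ)) + (∫ t in ξ₀..ζ, Uc (w t)) := by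
  obtain ⟨w', hw'cont, hw'maps, hw'w, hww'⟩ := hwinv
  set g : ℝ → ℝ := fun η => lam (Uc η) with hg
  -- g = w' on I
  have hgw' : ∀ η ∈ I, g η = w' η := by
    intro η hη
    have h1 := hres (w' η) (hw'maps hη)
    rw [hww' η hη] at h1
    exact h1
  have hgJ : ∀ η ∈ I, g η ∈ J := fun η hη => (hgw' η hη) ▸ hw'maps hη
  have hwg : ∀ η ∈ I, w (g η) = η := fun η hη => by rw [hgw' η hη]; exact hww' η hη
  have hvcont : ContinuousOn (fun t => Uc (w t)) J := by
    have hUcI : ContinuousOn Uc I := fun η hη =>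
      ((hode η hη).continuousAt.continuousWithinAt)
    exact hUcI.comp hw hwmaps
  set F : ℝ → (Fin n → ℝ) := fun s => ∫ t in ξ₀..s, Uc (w t) with hF
  have hFderiv : ∀ s ∈ J, HasDerivAt F (Uc (w s)) s := by
    intro s hs
    have hint : IntervalIntegrable (fun t => Uc (w t)) volume ξ₀ s :=
      (hvcont.mono (hJord.uIcc_subset hξ₀ hs)).intervalIntegrable
    have hmeas := hvcont.stronglyMeasurableAtFilter hJopen (μ := volume) s hs
    have hcont : ContinuousAt (fun t => Uc (w t)) s :=
      hvcont.continuousAt (hJopen.mem_nhds hs)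
    exact intervalIntegral.integral_hasDerivAt_right hint hmeas hcont
  set E : ℝ → (Fin n → ℝ) :=
    fun η => (-(g η)) • Uc η + f (Uc η) + F (g η) with hE
  have hEderiv : ∀ η ∈ I, HasDerivAt E 0 η := by
    intro η hη
    have hUcV : Uc η ∈ V := hmaps η hη
    have hode' := hode η hη
    have hlamd : HasFDerivAt lam (fderiv ℝ lam (Uc η)) (Uc η) :=
      ((hlam.contDiffAt (hVopen.mem_nhds hUcV)).differentiableAt one_ne_zero).hasFDerivAt
    set c : ℝ := fderiv ℝ lam (Uc η) (r (Uc η)) with hc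
    have hgd : HasDerivAt g c η := hlamd.comp_hasDerivAt η hode'
    have hfd : HasFDerivAt f (fderiv ℝ f (Uc η)) (Uc η) :=
      ((hf.contDiffAt (hU.mem_nhds (hVU hUcV))).differentiableAt
        (by norm_num)).hasFDerivAt
    have hfUc : HasDerivAt (fun η => f (Uc η)) (fderiv ℝ f (Uc η) (r (Uc η))) η :=
      hfd.comp_hasDerivAt η hode'
    have hterm1 : HasDerivAt (fun η => (-(g η)) • Uc η)
        ((-(g η)) • r (Uc η) + (-c) • Uc η) η := hgd.neg.smul hode'
    have hterm3 : HasDerivAt (fun η => F (g η)) (c • Uc (w (g η))) η :=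
      (hFderiv (g η) (hgJ η hη)).scomp η hgd
    have hsum := (hterm1.add hfUc).add hterm3
    have heq : ((-(g η)) • r (Uc η) + (-c) • Uc η) + fderiv ℝ f (Uc η) (r (Uc η))
        + c • Uc (w (g η)) = 0 := by
      rw [hwg η hη]
      have hDf : fderiv ℝ f (Uc η) (r (Uc η)) = lam (Uc η) • r (Uc η) := by
        have h := (heig (Uc η) hUcV).2
        have := neg_eq_of_add_eq_zero_right h
        rw [← this, neg_smul, neg_neg]
      rw [hDf]
      show ((-(lam (Uc η))) • r (Uc η) + (-c) • Uc η) + lam (Uc η) • r (Uc η)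
        + c • Uc η = 0
      module
    rw [heq] at hsum
    exact hsum
  have hIconv : Convex ℝ I := hIord.convex
  have hEdiff : DifferentiableOn ℝ E I := fun η hη =>
    ((hEderiv η hη).differentiableAt).differentiableWithinAt
  have hEfd : ∀ η ∈ I, fderivWithin ℝ E I η = 0 := by
    intro η hη
    have h0 : HasFDerivAt E (0 : ℝ →L[ℝ] (Fin n → ℝ)) η := by
      have h := (hEderiv η hη).hasFDerivAt
      have : (ContinuousLinearMap.toSpanSingleton ℝ (0 : Fin n → ℝ))
          = (0 : ℝ →L[ℝ] (Fin n → ℝ)) := by ext x; simp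
      rwa [this] at h
    rw [h0.hasFDerivWithinAt.fderivWithin (hIopen.uniqueDiffWithinAt hη)]
  intro ξ hξ ζ hζ
  have hkey : E (w ξ) = E (w ζ) :=
    hIconv.is_const_of_fderivWithin_eq_zero hEdiff hEfd (hwmaps hξ) (hwmaps hζ)
  have hgwξ : g (w ξ) = ξ := hres ξ hξ
  have hgwζ : g (w ζ) = ζ := hres ζ hζ
  simpa [hE, hF, hgwξ, hgwζ] using hkey

end
end

section
/- Let v be a reduced state function that is a self-similar weak solution of u_t + f(u)_x = 0, and let ξ⋆ ∈ ℝ be an ess-im discontinuity point of v. Then for every u⁻ ∈ A⁻(v; ξ⋆) and every u⁺ ∈ A⁺(v; ξ⋆), the Rankine–Hugoniot condition −ξ⋆ (u⁺ − u⁻) + f(u⁺) − f(u⁻) = 0 holds. -/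
open MeasureTheory Set Matrix

noncomputable section

open Filter Topology Convolution ContinuousLinearMap

/-- Integrability of a function with support in a compact set, bounded there. -/
lemma aux_integrable_of_support_subset {E : Type*} [NormedAddCommGroup E]
    {F : ℝ → E} {S : Set ℝ} {M : ℝ}
    (hF : AEStronglyMeasurable F volume) (hS : IsCompact S)
    (hsupp : Function.support F ⊆ S) (hM : ∀ ξ ∈ S, ‖F ξ‖ ≤ M) :
    Integrable F volume := by
  rw [← integrableOn_iff_integrable_of_support_subset hsupp]
  exact Measure.integrableOn_of_bounded (M := M) hS.measure_lt_top.ne hF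
    ((ae_restrict_iff' hS.measurableSet).2 (Filter.Eventually.of_forall hM))

set_option maxHeartbeats 1600000 in
/-- At an ess-im discontinuity point of a self-similar weak solution,
every pair of left/right accumulation states satisfies the Rankine–Hugoniot condition. -/
theorem rankine_hugoniot_at_discontinuity
    {n : ℕ} (U : Set (Fin n → ℝ)) (hU : IsOpen U)
    (f : (Fin n → ℝ) → (Fin n → ℝ)) (hf : ContDiffOn ℝ 2 f U)
    (hconv : convexHull ℝ (USH f U) ⊆ U)
    (v : ℝ → (Fin n → ℝ)) (hv : IsReducedState f U v)
    (hsol : IsSSWeakSol f v)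
    (ξs : ℝ) (hdisc : ¬ EssImContPt v ξs) :
    ∀ um ∈ AessL v ξs, ∀ up ∈ AessR v ξs,
      (-ξs) • (up - um) + (f up - f um) = 0 := by
  classical
  intro um hum up hup
  obtain ⟨hvmeas, ⟨C₀, hC₀⟩, hsub⟩ := hv
  set K : Set (Fin n → ℝ) := essimOn v Set.univ with hKdef
  have hsubessim : ∀ Y : Set ℝ, essimOn v Y ⊆ K := by
    intro Y z hz V hV hzV
    exact (hz V hV hzV).trans_le
      (measure_mono (Set.inter_subset_inter_right _ (Set.subset_univ _)))
  have hAL : ∀ r > (0:ℝ), um ∈ essimOn v (Set.Ioo (ξs - r) ξs) := by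
    simpa [AessL, Set.mem_iInter] using hum
  have hAR : ∀ r > (0:ℝ), up ∈ essimOn v (Set.Ioo ξs (ξs + r)) := by
    simpa [AessR, Set.mem_iInter] using hup
  have humK : um ∈ K := hsubessim _ (hAL 1 one_pos)
  have hupK : up ∈ K := hsubessim _ (hAR 1 one_pos)
  have hKU : K ⊆ U := fun z hz => (hsub hz).1
  have humU : um ∈ U := hKU humK
  have hupU : up ∈ U := hKU hupK
  -- K is contained in the closed ball of radius C₀
  have hKball : K ⊆ Metric.closedBall 0 C₀ := by
    intro z hz
    rw [Metric.mem_closedBall, dist_zero_right]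
    by_contra h
    push_neg at h
    have hV : IsOpen {y : Fin n → ℝ | C₀ < ‖y‖} := isOpen_lt continuous_const continuous_norm
    have hpos := hz _ hV h
    have hnull : volume (v ⁻¹' {y : Fin n → ℝ | C₀ < ‖y‖} ∩ Set.univ) = 0 := by
      refine measure_mono_null ?_ (ae_iff.1 hC₀)
      intro ξ hξ
      simp only [Set.mem_inter_iff, Set.mem_preimage, Set.mem_setOf_eq] at hξ ⊢
      exact not_le.2 hξ.1
    rw [hnull] at hpos
    exact lt_irrefl _ hpos
  have hC₀0 : 0 ≤ C₀ :=
    le_trans (norm_nonneg um) (by simpa [dist_zero_right] using hKball humK)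
  have hKclosed : IsClosed K := by
    rw [← isOpen_compl_iff, isOpen_iff_forall_mem_open]
    intro z hz
    simp only [Set.mem_compl_iff, hKdef, essimOn, Set.mem_setOf_eq] at hz
    push_neg at hz
    obtain ⟨V, hVopen, hzV, hVnull⟩ := hz
    refine ⟨V, ?_, hVopen, hzV⟩
    intro y hy hyK
    exact absurd (hyK V hVopen hy) (by simpa using hVnull)
  have hKcomp : IsCompact K :=
    IsCompact.of_isClosed_subset (isCompact_closedBall 0 C₀) hKclosed hKball
  -- a.e. ξ, v ξ ∈ K
  have haeK : ∀ᵐ ξ : ℝ ∂volume, v ξ ∈ K := by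
    obtain ⟨b, hbc, -, hb⟩ := TopologicalSpace.exists_countable_basis (Fin n → ℝ)
    rw [ae_iff]
    have hnull : volume (⋃ W ∈ {W ∈ b | volume (v ⁻¹' W) = 0}, v ⁻¹' W) = 0 := by
      rw [measure_biUnion_null_iff (hbc.mono (Set.sep_subset _ _))]
      exact fun W hW => hW.2
    refine measure_mono_null ?_ hnull
    intro ξ hξ
    simp only [Set.mem_setOf_eq, hKdef, essimOn] at hξ
    push_neg at hξ
    obtain ⟨V, hVopen, hzV, hVnull⟩ := hξ
    rw [Set.inter_univ] at hVnull
    replace hVnull : volume (v ⁻¹' V) = 0 := le_antisymm (by simpa using hVnull) zero_le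
    obtain ⟨W, hWb, hzW, hWV⟩ := hb.exists_subset_of_mem_open hzV hVopen
    refine Set.mem_biUnion ?_ hzW
    exact ⟨hWb, measure_mono_null (Set.preimage_mono hWV) hVnull⟩
  -- the modification v' taking values in K everywhere
  set v' : ℝ → (Fin n → ℝ) := fun ξ => if v ξ ∈ K then v ξ else um with hv'def
  have hv'K : ∀ ξ, v' ξ ∈ K := by
    intro ξ
    by_cases h : v ξ ∈ K <;> simp [hv'def, h, humK]
  have hv'eq : ∀ᵐ ξ : ℝ ∂volume, v ξ = v' ξ := haeK.mono fun ξ h => by simp [hv'def, h]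
  have hv'meas : Measurable v' :=
    Measurable.ite (hvmeas hKclosed.measurableSet) hvmeas measurable_const
  have hv'bd : ∀ ξ, ‖v' ξ‖ ≤ C₀ := fun ξ => by
    simpa [dist_zero_right] using hKball (hv'K ξ)
  have hfc : ContinuousOn f U := hf.continuousOn
  have hfv'meas : Measurable (fun ξ => f (v' ξ)) := by
    have h1 : Continuous (fun z : K => f z) :=
      continuousOn_iff_continuous_restrict.1 (hfc.mono hKU)
    have h2 : Measurable (fun ξ => (⟨v' ξ, hv'K ξ⟩ : K)) := hv'meas.subtype_mk
    exact h1.measurable.comp h2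
  obtain ⟨Cf, hCf⟩ := hKcomp.exists_bound_of_continuousOn (hfc.mono hKU)
  set g : ℝ → (Fin n → ℝ) := fun ξ => (-ξ) • v' ξ + f (v' ξ) with hgdef
  have hgmeas : Measurable g := (measurable_id.neg.smul hv'meas).add hfv'meas
  have hgb : ∀ ξ, ‖g ξ‖ ≤ |ξ| * C₀ + Cf := by
    intro ξ
    calc ‖(-ξ) • v' ξ + f (v' ξ)‖ ≤ ‖(-ξ) • v' ξ‖ + ‖f (v' ξ)‖ := norm_add_le _ _
      _ ≤ |ξ| * C₀ + Cf := by
          rw [norm_smul, Real.norm_eq_abs, abs_neg]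
          exact add_le_add (mul_le_mul_of_nonneg_left (hv'bd ξ) (abs_nonneg ξ))
            (hCf _ (hv'K ξ))
  have hgloc : LocallyIntegrable g volume := by
    rw [locallyIntegrable_iff]
    intro k hk
    obtain ⟨R, hR⟩ := hk.isBounded.subset_closedBall 0
    refine Measure.integrableOn_of_bounded (M := |R| * C₀ + Cf) hk.measure_lt_top.ne
      hgmeas.aestronglyMeasurable ?_
    refine (ae_restrict_iff' hk.measurableSet).2 (Filter.Eventually.of_forall fun ξ hξ => ?_)
    refine (hgb ξ).trans (add_le_add_left (mul_le_mul_of_nonneg_right ?_ hC₀0) Cf)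
    have : |ξ| ≤ R := by simpa [dist_zero_right] using hR hξ
    exact this.trans (le_abs_self R)
  set L : ℝ →L[ℝ] (Fin n → ℝ) →L[ℝ] (Fin n → ℝ) := ContinuousLinearMap.lsmul ℝ ℝ with hLdef
  -- the key Lipschitz estimate for mollifications of g
  have key : ∀ φ : ContDiffBump (0:ℝ), ∀ x y : ℝ,
      ‖(φ.normed volume ⋆[L, volume] g) x - (φ.normed volume ⋆[L, volume] g) y‖
        ≤ C₀ * |x - y| := by
    intro φ x y
    set φn : ℝ → ℝ := φ.normed volume with hφndef
    have hφn1 : ContDiff ℝ 1 φn := φ.contDiff_normed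
    have hφncont : Continuous φn := hφn1.continuous
    have hφnsupp : HasCompactSupport φn := φ.hasCompactSupport_normed
    have hdiffφ : Differentiable ℝ φn := (contDiff_infty_iff_deriv.1 φ.contDiff_normed).1
    have hdcont : Continuous (deriv φn) :=
      ((contDiff_infty_iff_deriv.1 φ.contDiff_normed).2).continuous
    have hdsupp : HasCompactSupport (deriv φn) := hφnsupp.deriv
    -- compact support set trick
    have hcomp : ∀ (x : ℝ) (h : ℝ → ℝ), HasCompactSupport h →
        IsCompact ((fun t => x - t) '' tsupport h) := by
      intro x h hh
      exact hh.image (continuous_const.sub continuous_id)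
    have hmemim : ∀ (x ξ : ℝ) (h : ℝ → ℝ), h (x - ξ) ≠ 0 →
        ξ ∈ (fun t => x - t) '' tsupport h := by
      intro x ξ h hne
      exact ⟨x - ξ, subset_tsupport h hne, by ring⟩
    -- global bounds for φn and deriv φn
    obtain ⟨Mφ, hMφ⟩ := hφnsupp.exists_bound_of_continuousOn hφncont.continuousOn
    obtain ⟨Md, hMd⟩ := hdsupp.exists_bound_of_continuousOn hdcont.continuousOn
    have hMφ' : ∀ t, |φn t| ≤ max Mφ 0 := by
      intro t
      by_cases h : t ∈ tsupport φn
      · exact le_trans (by simpa using hMφ t h) (le_max_left _ _)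
      · simp [image_eq_zero_of_notMem_tsupport h, le_max_right]
    have hMd' : ∀ t, |deriv φn t| ≤ max Md 0 := by
      intro t
      by_cases h : t ∈ tsupport (deriv φn)
      · exact le_trans (by simpa using hMd t h) (le_max_left _ _)
      · simp [image_eq_zero_of_notMem_tsupport h, le_max_right]
    -- the main identity : (deriv φn ⋆ g) x = -((φn ⋆ v') x)
    have hid : ∀ x : ℝ, (deriv φn ⋆[L, volume] g) x = -((φn ⋆[L, volume] v') x) := by
      intro x
      -- integrability of the vector integrands
      obtain ⟨R, hR⟩ := ((hcomp x _ hdsupp).union (hcomp x _ hφnsupp)).isBounded.subset_closedBall 0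
      have habs : ∀ ξ : ℝ, ξ ∈ Metric.closedBall (0:ℝ) R → |ξ| ≤ |R| := by
        intro ξ hξ
        have : |ξ| ≤ R := by simpa [dist_zero_right] using hξ
        exact this.trans (le_abs_self R)
      have hFgmeas : AEStronglyMeasurable (fun ξ => deriv φn (x - ξ) • g ξ) volume :=
        (((hdcont.comp (continuous_const.sub continuous_id)).measurable).smul
          hgmeas).aestronglyMeasurable
      have hFvmeas : AEStronglyMeasurable (fun ξ => φn (x - ξ) • v' ξ) volume :=
        (((hφncont.comp (continuous_const.sub continuous_id)).measurable).smul
          hv'meas).aestronglyMeasurable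
      have hFg : Integrable (fun ξ => deriv φn (x - ξ) • g ξ) volume := by
        refine aux_integrable_of_support_subset (S := Metric.closedBall 0 R)
          (M := max Md 0 * (|R| * C₀ + Cf)) hFgmeas (isCompact_closedBall _ _) ?_ ?_
        · intro ξ hξ
          have : deriv φn (x - ξ) ≠ 0 := by
            intro h0; apply hξ; simp [h0]
          exact hR (Set.mem_union_left _ (hmemim x ξ _ this))
        · intro ξ hξ
          rw [norm_smul, Real.norm_eq_abs]
          refine mul_le_mul (hMd' _) ((hgb ξ).trans ?_) (norm_nonneg _)
            (le_max_of_le_right le_rfl)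
          exact add_le_add_left (mul_le_mul_of_nonneg_right (habs ξ hξ) hC₀0) Cf
      have hFv : Integrable (fun ξ => φn (x - ξ) • v' ξ) volume := by
        refine aux_integrable_of_support_subset (S := Metric.closedBall 0 R)
          (M := max Mφ 0 * C₀) hFvmeas (isCompact_closedBall _ _) ?_ ?_
        · intro ξ hξ
          have : φn (x - ξ) ≠ 0 := by
            intro h0; apply hξ; simp [h0]
          exact hR (Set.mem_union_right _ (hmemim x ξ _ this))
        · intro ξ _
          rw [norm_smul, Real.norm_eq_abs]
          exact mul_le_mul (hMφ' _) (hv'bd ξ) (norm_nonneg _) (le_max_of_le_right le_rfl)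
      -- componentwise computation using the weak formulation
      have main : ∀ i : Fin n,
          ∫ ξ : ℝ, deriv φn (x - ξ) * g ξ i = -∫ ξ : ℝ, φn (x - ξ) * v' ξ i := by
        intro i
        set e : Fin n → ℝ := Pi.single i 1 with hedef
        set ψ : ℝ → (Fin n → ℝ) := fun ξ => φn (x - ξ) • e with hψdef
        have hψd : ∀ ξ, HasDerivAt ψ ((-(deriv φn (x - ξ))) • e) ξ := by
          intro ξ
          have h1 : HasDerivAt (fun ξ : ℝ => x - ξ) (-1) ξ :=
            (hasDerivAt_id ξ).const_sub x
          have h2 : HasDerivAt φn (deriv φn (x - ξ)) (x - ξ) :=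
            (hdiffφ (x - ξ)).hasDerivAt
          have h3 := (h2.comp ξ h1).smul_const e
          simpa [Function.comp, mul_neg_one] using h3
        have hψderiv : deriv ψ = fun ξ => (-(deriv φn (x - ξ))) • e :=
          funext fun ξ => (hψd ξ).deriv
        have hψC1 : ContDiff ℝ 1 ψ :=
          (hφn1.comp (contDiff_const.sub contDiff_id)).smul contDiff_const
        have hψsupp : HasCompactSupport ψ := by
          refine HasCompactSupport.intro (hcomp x _ hφnsupp) ?_
          intro ξ hξ
          have : φn (x - ξ) = 0 := by
            by_contra h0
            exact hξ (hmemim x ξ _ h0)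
          simp [hψdef, this]
        have h0 := hsol ψ hψC1 hψsupp
        have hcongr : ∫ ξ : ℝ, ((deriv ψ ξ) ⬝ᵥ ((-ξ) • v ξ + f (v ξ)) - (ψ ξ) ⬝ᵥ (v ξ))
            = ∫ ξ : ℝ, ((-(deriv φn (x - ξ))) * g ξ i - φn (x - ξ) * v' ξ i) := by
          refine integral_congr_ae ?_
          filter_upwards [hv'eq] with ξ hξ
          rw [hψderiv, hψdef, ← hξ]
          simp only [hedef, smul_dotProduct, single_dotProduct, one_mul,
            smul_eq_mul, hgdef, hξ]
        rw [hcongr] at h0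
        -- integrability of the two scalar pieces
        have hI1 : Integrable (fun ξ : ℝ => (-(deriv φn (x - ξ))) * g ξ i) volume := by
          have := hFg.neg
          have h := (ContinuousLinearMap.proj (R := ℝ) (φ := fun _ : Fin n => ℝ) i).integrable_comp this
          refine h.congr (Filter.Eventually.of_forall fun ξ => ?_)
          simp [neg_smul, neg_mul]
        have hI2 : Integrable (fun ξ : ℝ => φn (x - ξ) * v' ξ i) volume := by
          have h := (ContinuousLinearMap.proj (R := ℝ) (φ := fun _ : Fin n => ℝ) i).integrable_comp hFv
          refine h.congr (Filter.Eventually.of_forall fun ξ => ?_)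
          simp
        rw [integral_sub hI1 hI2, sub_eq_zero] at h0
        have : ∫ ξ : ℝ, (-(deriv φn (x - ξ))) * g ξ i
            = -∫ ξ : ℝ, deriv φn (x - ξ) * g ξ i := by
          rw [← integral_neg]
          congr 1
          funext ξ
          ring
        rw [this] at h0
        linarith [h0]
      -- assemble the vector identity
      have hswap1 : (deriv φn ⋆[L, volume] g) x = ∫ ξ, deriv φn (x - ξ) • g ξ := by
        rw [convolution_eq_swap]
        simp only [hLdef, ContinuousLinearMap.lsmul_apply]
      have hswap2 : (φn ⋆[L, volume] v') x = ∫ ξ, φn (x - ξ) • v' ξ := by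
        rw [convolution_eq_swap]
        simp only [hLdef, ContinuousLinearMap.lsmul_apply]
      rw [hswap1, hswap2]
      funext i
      have hp1 : (∫ ξ, deriv φn (x - ξ) • g ξ) i = ∫ ξ, deriv φn (x - ξ) * g ξ i := by
        have h := (ContinuousLinearMap.proj (R := ℝ) (φ := fun _ : Fin n => ℝ)
          i).integral_comp_comm hFg
        simp only [ContinuousLinearMap.proj_apply, Pi.smul_apply, smul_eq_mul] at h
        exact h.symm
      have hp2 : (∫ ξ, φn (x - ξ) • v' ξ) i = ∫ ξ, φn (x - ξ) * v' ξ i := by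
        have h := (ContinuousLinearMap.proj (R := ℝ) (φ := fun _ : Fin n => ℝ)
          i).integral_comp_comm hFv
        simp only [ContinuousLinearMap.proj_apply, Pi.smul_apply, smul_eq_mul] at h
        exact h.symm
      rw [Pi.neg_apply, hp1, hp2, main i]
    -- derivative of the convolution
    have hconvderiv : ∀ x : ℝ, HasDerivAt (φn ⋆[L, volume] g)
        (-((φn ⋆[L, volume] v') x)) x := by
      intro x
      have h1 := HasCompactSupport.hasDerivAt_convolution_left L hφnsupp hφn1 hgloc x
      rwa [hid x] at h1
    have hdiffconv : Differentiable ℝ (φn ⋆[L, volume] g) :=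
      fun x => (hconvderiv x).differentiableAt
    have hbound : ∀ x : ℝ, ‖deriv (φn ⋆[L, volume] g) x‖ ≤ C₀ := by
      intro x
      rw [(hconvderiv x).deriv, norm_neg, convolution_eq_swap]
      simp only [hLdef, ContinuousLinearMap.lsmul_apply]
      have hint : Integrable (fun t : ℝ => φn (x - t) * C₀) volume := by
        refine Continuous.integrable_of_hasCompactSupport
          ((hφncont.comp (continuous_const.sub continuous_id)).mul continuous_const) ?_
        refine HasCompactSupport.intro (hcomp x _ hφnsupp) ?_
        intro ξ hξ
        have : φn (x - ξ) = 0 := by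
          by_contra h0
          exact hξ (hmemim x ξ _ h0)
        simp [this]
      have hle : ‖∫ t : ℝ, φn (x - t) • v' t‖ ≤ ∫ t : ℝ, φn (x - t) * C₀ := by
        refine norm_integral_le_of_norm_le hint (Filter.Eventually.of_forall fun t => ?_)
        rw [norm_smul, Real.norm_eq_abs, abs_of_nonneg (φ.nonneg_normed _)]
        exact mul_le_mul_of_nonneg_left (hv'bd t) (φ.nonneg_normed _)
      refine hle.trans ?_
      rw [integral_mul_const, MeasureTheory.integral_sub_left_eq_self φn volume x]
      rw [φ.integral_normed, one_mul]
    have hlip : LipschitzWith C₀.toNNReal (φn ⋆[L, volume] g) := by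
      refine lipschitzWith_of_nnnorm_deriv_le hdiffconv fun x => ?_
      rw [← NNReal.coe_le_coe, coe_nnnorm, Real.coe_toNNReal _ hC₀0]
      exact hbound x
    have := hlip.dist_le_mul x y
    rwa [dist_eq_norm, Real.dist_eq, Real.coe_toNNReal _ hC₀0] at this
  -- bump family
  set φk : ℕ → ContDiffBump (0:ℝ) := fun k =>
    ⟨((k:ℝ)+1)⁻¹, 2*((k:ℝ)+1)⁻¹, by positivity, by
      have : (0:ℝ) < ((k:ℝ)+1)⁻¹ := by positivity
      linarith⟩ with hφkdef
  have hinv : Tendsto (fun k : ℕ => ((k:ℝ)+1)⁻¹) atTop (𝓝 0) := by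
    simpa [one_div] using tendsto_one_div_add_atTop_nhds_zero_nat (𝕜 := ℝ)
  have hφr : Tendsto (fun k => (φk k).rOut) atTop (𝓝 0) := by
    have := hinv.const_mul 2
    simpa [hφkdef] using this
  have hφK : ∀ᶠ k in atTop, (φk k).rOut ≤ 2 * (φk k).rIn :=
    Filter.Eventually.of_forall fun k => le_of_eq rfl
  have hae := ContDiffBump.ae_convolution_tendsto_right_of_locallyIntegrable
    (μ := volume) hφr hφK hgloc
  -- the good set
  set P : ℝ → Prop := fun ξ =>
    Tendsto (fun k => ((φk k).normed volume ⋆[L, volume] g) ξ) atTop (𝓝 (g ξ)) ∧ v ξ = v' ξ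
    with hPdef
  have haeP : ∀ᵐ ξ : ℝ ∂volume, P ξ := by
    filter_upwards [hae, hv'eq] with ξ h1 h2
    exact ⟨h1, h2⟩
  have hlipS : ∀ x y : ℝ, P x → P y → ‖g x - g y‖ ≤ C₀ * |x - y| := by
    intro x y hx hy
    have ht : Tendsto (fun k => ‖((φk k).normed volume ⋆[L, volume] g) x
        - ((φk k).normed volume ⋆[L, volume] g) y‖) atTop (𝓝 ‖g x - g y‖) :=
      (hx.1.sub hy.1).norm
    exact le_of_tendsto ht (Filter.Eventually.of_forall fun k => key (φk k) x y)
  -- choose sequences approaching ξs from the left and right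
  have hseqL : ∀ k : ℕ, ∃ ξ, ξ ∈ Set.Ioo (ξs - ((k:ℝ)+1)⁻¹) ξs ∧
      v ξ ∈ Metric.ball um (((k:ℝ)+1)⁻¹) ∧ P ξ := by
    intro k
    have hrpos : (0:ℝ) < ((k:ℝ)+1)⁻¹ := by positivity
    have hpos := hAL _ hrpos (Metric.ball um (((k:ℝ)+1)⁻¹)) Metric.isOpen_ball
      (Metric.mem_ball_self hrpos)
    by_contra h
    push_neg at h
    have hsubnull : v ⁻¹' (Metric.ball um (((k:ℝ)+1)⁻¹))
        ∩ Set.Ioo (ξs - ((k:ℝ)+1)⁻¹) ξs ⊆ {ξ | ¬ P ξ} := by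
      intro ξ hξ
      exact h ξ hξ.2 hξ.1
    have := measure_mono_null hsubnull (ae_iff.1 haeP)
    rw [this] at hpos
    exact lt_irrefl _ hpos
  have hseqR : ∀ k : ℕ, ∃ ξ, ξ ∈ Set.Ioo ξs (ξs + ((k:ℝ)+1)⁻¹) ∧
      v ξ ∈ Metric.ball up (((k:ℝ)+1)⁻¹) ∧ P ξ := by
    intro k
    have hrpos : (0:ℝ) < ((k:ℝ)+1)⁻¹ := by positivity
    have hpos := hAR _ hrpos (Metric.ball up (((k:ℝ)+1)⁻¹)) Metric.isOpen_ball
      (Metric.mem_ball_self hrpos)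
    by_contra h
    push_neg at h
    have hsubnull : v ⁻¹' (Metric.ball up (((k:ℝ)+1)⁻¹))
        ∩ Set.Ioo ξs (ξs + ((k:ℝ)+1)⁻¹) ⊆ {ξ | ¬ P ξ} := by
      intro ξ hξ
      exact h ξ hξ.2 hξ.1
    have := measure_mono_null hsubnull (ae_iff.1 haeP)
    rw [this] at hpos
    exact lt_irrefl _ hpos
  choose aL haL1 haL2 haL3 using hseqL
  choose aR haR1 haR2 haR3 using hseqR
  -- limits of the sequences
  have htL : Tendsto aL atTop (𝓝 ξs) := by
    rw [tendsto_iff_dist_tendsto_zero]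
    refine squeeze_zero (fun k => dist_nonneg) (fun k => ?_) hinv
    rw [Real.dist_eq]
    obtain ⟨h1, h2⟩ := Set.mem_Ioo.mp (haL1 k)
    have hrpos : (0:ℝ) < ((k:ℝ)+1)⁻¹ := by positivity
    exact abs_le.2 ⟨by linarith, by linarith⟩
  have htR : Tendsto aR atTop (𝓝 ξs) := by
    rw [tendsto_iff_dist_tendsto_zero]
    refine squeeze_zero (fun k => dist_nonneg) (fun k => ?_) hinv
    rw [Real.dist_eq]
    obtain ⟨h1, h2⟩ := Set.mem_Ioo.mp (haR1 k)
    have hrpos : (0:ℝ) < ((k:ℝ)+1)⁻¹ := by positivity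
    exact abs_le.2 ⟨by linarith, by linarith⟩
  have hvL : Tendsto (fun k => v' (aL k)) atTop (𝓝 um) := by
    rw [tendsto_iff_dist_tendsto_zero]
    refine squeeze_zero (fun k => dist_nonneg) (fun k => ?_) hinv
    rw [← (haL3 k).2]
    exact (haL2 k).le
  have hvR : Tendsto (fun k => v' (aR k)) atTop (𝓝 up) := by
    rw [tendsto_iff_dist_tendsto_zero]
    refine squeeze_zero (fun k => dist_nonneg) (fun k => ?_) hinv
    rw [← (haR3 k).2]
    exact (haR2 k).le
  have hfum : ContinuousAt f um := hfc.continuousAt (hU.mem_nhds humU)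
  have hfup : ContinuousAt f up := hfc.continuousAt (hU.mem_nhds hupU)
  have hgL : Tendsto (fun k => g (aL k)) atTop (𝓝 ((-ξs) • um + f um)) := by
    have : Tendsto (fun k => (-(aL k)) • v' (aL k) + f (v' (aL k))) atTop
        (𝓝 ((-ξs) • um + f um)) :=
      (htL.neg.smul hvL).add (hfum.tendsto.comp hvL)
    exact this
  have hgR : Tendsto (fun k => g (aR k)) atTop (𝓝 ((-ξs) • up + f up)) := by
    have : Tendsto (fun k => (-(aR k)) • v' (aR k) + f (v' (aR k))) atTop
        (𝓝 ((-ξs) • up + f up)) :=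
      (htR.neg.smul hvR).add (hfup.tendsto.comp hvR)
    exact this
  have hdiff0 : Tendsto (fun k => g (aL k) - g (aR k)) atTop
      (𝓝 (((-ξs) • um + f um) - ((-ξs) • up + f up))) := hgL.sub hgR
  have hnorm0 : Tendsto (fun k => g (aL k) - g (aR k)) atTop (𝓝 0) := by
    refine squeeze_zero_norm (fun k => hlipS _ _ (haL3 k) (haR3 k)) ?_
    have : Tendsto (fun k => C₀ * |aL k - aR k|) atTop (𝓝 (C₀ * |ξs - ξs|)) :=
      ((htL.sub htR).abs).const_mul C₀
    simpa using this
  have hpm : ((-ξs) • um + f um) - ((-ξs) • up + f up) = 0 :=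
    tendsto_nhds_unique hdiff0 hnorm0
  have hpm' : (-ξs) • um + f um = (-ξs) • up + f up := sub_eq_zero.mp hpm
  calc (-ξs) • (up - um) + (f up - f um)
      = ((-ξs) • up + f up) - ((-ξs) • um + f um) := by rw [smul_sub]; abel
    _ = 0 := by rw [← hpm']; exact sub_self _

end
end
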